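/- arXiv:2603.23671 — 7 statements merged into one kernel-verified Lean document; each statement's English description precedes it below -/
import Mathlib

section
/- If (X,d,μ) is a totally bounded metric measure space (with μ positive and finite on balls), then the measure μ is integrable, i.e., for every r > 0 the function x ↦ 1/μ(B(x,r)) is μ-integrable over X. -/
open MeasureTheory Metric
open scoped ENNReal

/-- If `(X, d, μ)` is a totally bounded metric measure space (with `μ` a
Borel measure, positive and finite on balls), then the measure `μ` is integrable: for every
`r > 0` the function `x ↦ 1 / μ(B(x, r))` is `μ`-integrable over `X`, i.e. the integral
`∫_X 1 / μ(B(x, r)) dμ(x)` is finite. -/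
theorem integrable_measure_of_totallyBounded
    {X : Type*} [MetricSpace X] [MeasurableSpace X] [BorelSpace X] (μ : Measure X)
    (hball : ∀ (x : X) (r : ℝ), 0 < r → 0 < μ (ball x r) ∧ μ (ball x r) < ⊤)
    (htb : TotallyBounded (Set.univ : Set X)) :
    ∀ r : ℝ, 0 < r → ∫⁻ x, (μ (ball x r))⁻¹ ∂μ < ⊤ := by
  intro r hr
  have hr2 : (0:ℝ) < r / 2 := by linarith
  obtain ⟨t, htf, hcov⟩ := (totallyBounded_iff.mp htb) (r/2) hr2
  have key : ∀ c : X, ∫⁻ x in ball c (r/2), (μ (ball x r))⁻¹ ∂μ ≤ 1 := by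
    intro c
    have hsub : ∀ x ∈ ball c (r/2), ball c (r/2) ⊆ ball x r := by
      intro x hx y hy
      rw [mem_ball] at *
      calc dist y x ≤ dist y c + dist c x := dist_triangle _ _ _
        _ < r/2 + r/2 := by
            have := dist_comm x c
            exact add_lt_add hy (by rwa [dist_comm])
        _ = r := by ring
    calc ∫⁻ x in ball c (r/2), (μ (ball x r))⁻¹ ∂μ
        ≤ ∫⁻ _ in ball c (r/2), (μ (ball c (r/2)))⁻¹ ∂μ := by
          apply setLIntegral_mono measurable_const
          intro x hx
          exact ENNReal.inv_le_inv.mpr (measure_mono (hsub x hx))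
      _ = (μ (ball c (r/2)))⁻¹ * μ (ball c (r/2)) := by
          rw [setLIntegral_const]
      _ ≤ 1 := by
          rw [ENNReal.inv_mul_le_iff (hball c (r/2) hr2).1.ne'
            (hball c (r/2) hr2).2.ne]
          exact le_mul_of_one_le_right zero_le le_rfl
  have huniv : (Set.univ : Set X) ⊆ ⋃ c ∈ t, ball c (r/2) := hcov
  calc ∫⁻ x, (μ (ball x r))⁻¹ ∂μ
      = ∫⁻ x in Set.univ, (μ (ball x r))⁻¹ ∂μ := by
        rw [Measure.restrict_univ]
    _ ≤ ∫⁻ x in ⋃ c ∈ t, ball c (r/2), (μ (ball x r))⁻¹ ∂μ :=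
        lintegral_mono_set huniv
    _ ≤ ∑' c : t, ∫⁻ x in ball (c:X) (r/2), (μ (ball x r))⁻¹ ∂μ := by
        rw [Set.biUnion_eq_iUnion]
        have : Countable t := htf.countable
        exact lintegral_iUnion_le _ _
    _ ≤ ∑' _ : t, 1 := ENNReal.tsum_le_tsum fun c => key c
    _ < ⊤ := by
        have : Finite t := htf
        have : Fintype t := Fintype.ofFinite t
        rw [tsum_fintype]
        simp [Finset.sum_const]
end

section
/- Let μ be the measure on (0,∞) given by dμ = e^{ε x^β} dx with β > 1 and ε ∈ {-1,1}, and d the Euclidean distance. Then μ is integrable: for every r > 0, ∫_0^∞ 1/μ(B(x,r)) dμ(x) < ∞. -/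
open MeasureTheory Metric
open scoped ENNReal
open Set Real

/-- The measure on `(0, ∞)` given by `dμ = e^{ε x^β} dx`, regarded as a measure on `ℝ`
supported on `(0, ∞)`. -/
noncomputable def gaussType (ε β : ℝ) : Measure ℝ :=
  (volume.restrict (Set.Ioi (0 : ℝ))).withDensity fun x =>
    ENNReal.ofReal (Real.exp (ε * Real.rpow x β))

lemma my_integrableOn_exp_neg_mul_rpow {c γ : ℝ} (hc : 0 < c) (hγ : 0 < γ) :
    IntegrableOn (fun x : ℝ => Real.exp (-c * x ^ γ)) (Set.Ioi 0) := by
  have hs : (-1 : ℝ) < 1/γ - 1 := by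
    have : 0 < 1/γ := by positivity
    linarith
  have hf : IntegrableOn (fun y : ℝ => y ^ (1/γ - 1) * Real.exp (-c * y ^ (1:ℝ)))
      (Set.Ioi 0) := integrableOn_rpow_mul_exp_neg_mul_rpow hs one_pos hc
  have h2 := (integrableOn_Ioi_comp_rpow_iff'
      (fun y : ℝ => y ^ (1/γ - 1) * Real.exp (-c * y ^ (1:ℝ))) hγ.ne').mpr hf
  refine h2.congr_fun (fun x hx => ?_) measurableSet_Ioi
  have hx0 : (0:ℝ) < x := hx
  have hxγ : (0:ℝ) < x ^ γ := Real.rpow_pos_of_pos hx0 γ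
  dsimp only
  rw [smul_eq_mul, Real.rpow_one, ← Real.rpow_mul hx0.le, ← mul_assoc,
    ← Real.rpow_add hx0]
  have : γ - 1 + γ * (1/γ - 1) = 0 := by field_simp; ring
  rw [this, Real.rpow_zero, one_mul]

lemma my_rpow_convex {β : ℝ} (hβ : 1 < β) {y s : ℝ} (hy : 0 < y) (hs : 0 ≤ s) :
    y ^ β + y ^ (β - 1) * s ≤ (y + s) ^ β := by
  have hys : 0 < y + s := by linarith
  have h1 : y ^ (β - 1) ≤ (y + s) ^ (β - 1) :=
    Real.rpow_le_rpow hy.le (by linarith) (by linarith)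
  have hy' : y ^ β = y ^ (β - 1) * y := by
    rw [← Real.rpow_add_one hy.ne' (β - 1)]; ring_nf
  have hys' : (y + s) ^ β = (y + s) ^ (β - 1) * (y + s) := by
    rw [← Real.rpow_add_one hys.ne' (β - 1)]; ring_nf
  rw [hy', hys']
  calc y ^ (β - 1) * y + y ^ (β - 1) * s = y ^ (β - 1) * (y + s) := by ring
    _ ≤ (y + s) ^ (β - 1) * (y + s) := by
        exact mul_le_mul_of_nonneg_right h1 hys.le

lemma gaussType_density_meas (ε β : ℝ) :
    Measurable (fun t : ℝ => ENNReal.ofReal (Real.exp (ε * t ^ β))) := by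
  fun_prop

lemma gaussType_ball_lb (ε β : ℝ) {x r a b m : ℝ} (hm : 0 ≤ m)
    (hI : Set.Ioo a b ⊆ ball x r ∩ Set.Ioi 0)
    (hlb : ∀ t ∈ Set.Ioo a b, m ≤ Real.exp (ε * t ^ β)) :
    ENNReal.ofReal (m * (b - a)) ≤ gaussType ε β (ball x r) := by
  rw [gaussType, withDensity_apply _ measurableSet_ball,
    Measure.restrict_restrict measurableSet_ball]
  calc ENNReal.ofReal (m * (b - a)) = ENNReal.ofReal m * volume (Set.Ioo a b) := by
        rw [Real.volume_Ioo, ← ENNReal.ofReal_mul hm]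
    _ = ∫⁻ _ in Set.Ioo a b, ENNReal.ofReal m := (setLIntegral_const _ _).symm
    _ ≤ ∫⁻ t in Set.Ioo a b, ENNReal.ofReal (Real.exp (ε * t ^ β)) :=
        setLIntegral_mono (gaussType_density_meas ε β) fun t ht => ENNReal.ofReal_le_ofReal (hlb t ht)
    _ ≤ ∫⁻ t in ball x r ∩ Set.Ioi 0, ENNReal.ofReal (Real.exp (ε * Real.rpow t β)) :=
        lintegral_mono_set hI

lemma gaussType_step (ε β : ℝ) {x r a b m D : ℝ} (hm : 0 < m) (hab : a < b)
    (hI : Set.Ioo a b ⊆ ball x r ∩ Set.Ioi 0)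
    (hlb : ∀ t ∈ Set.Ioo a b, m ≤ Real.exp (ε * t ^ β))
    (hD : Real.exp (ε * x ^ β) ≤ D * (m * (b - a))) :
    ENNReal.ofReal (Real.exp (ε * x ^ β)) * (gaussType ε β (ball x r))⁻¹ ≤
      ENNReal.ofReal D := by
  have hL : 0 < m * (b - a) := mul_pos hm (by linarith)
  have hμ := gaussType_ball_lb ε β hm.le hI hlb
  have h1 : (gaussType ε β (ball x r))⁻¹ ≤ (ENNReal.ofReal (m * (b - a)))⁻¹ :=
    ENNReal.inv_le_inv' hμ
  calc ENNReal.ofReal (Real.exp (ε * x ^ β)) * (gaussType ε β (ball x r))⁻¹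
      ≤ ENNReal.ofReal (Real.exp (ε * x ^ β)) * (ENNReal.ofReal (m * (b - a)))⁻¹ :=
        mul_le_mul_right h1 _
    _ = ENNReal.ofReal (Real.exp (ε * x ^ β) * (m * (b - a))⁻¹) := by
        rw [← ENNReal.ofReal_inv_of_pos hL, ← ENNReal.ofReal_mul (Real.exp_nonneg _)]
    _ ≤ ENNReal.ofReal D := ENNReal.ofReal_le_ofReal (by
        rw [← div_eq_mul_inv]; exact (div_le_iff₀ hL).mpr hD)

lemma exp_le_K_mul_exp {A B K : ℝ} (hK : 1 ≤ K) (h : A ≤ B) :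
    Real.exp A ≤ K * Real.exp B :=
  (Real.exp_le_exp.mpr h).trans (le_mul_of_one_le_left (Real.exp_pos B).le hK)

lemma gaussType_pointwise (β : ℝ) (hβ : 1 < β) (ε : ℝ) (hε : ε = -1 ∨ ε = 1)
    {r : ℝ} (hr : 0 < r) {x : ℝ} (hx : 0 < x) :
    ENNReal.ofReal (Real.exp (ε * x ^ β)) * (gaussType ε β (ball x r))⁻¹ ≤
      ENNReal.ofReal ((2 / r * Real.exp (r ^ β + r / 2 / (2:ℝ) ^ (β - 1) * (2 * r) ^ (β - 1))) *
        Real.exp (-(r / 2 / (2:ℝ) ^ (β - 1)) * x ^ (β - 1))) := by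
  have hγ : 0 < β - 1 := by linarith
  set γ := β - 1 with hγdef
  have h2γ : (1:ℝ) ≤ (2:ℝ) ^ γ := Real.one_le_rpow one_le_two hγ.le
  set c := r / 2 / (2:ℝ) ^ γ with hcdef
  have hc0 : 0 < c := by positivity
  have hcr : c ≤ r / 2 := div_le_self (by positivity) h2γ
  set s0 := r ^ β + c * (2 * r) ^ γ with hs0def
  have h2r : (0:ℝ) ≤ (2 * r) ^ γ := Real.rpow_nonneg (by linarith) _
  have hs0nn : 0 ≤ s0 := by
    have : (0:ℝ) ≤ r ^ β := Real.rpow_nonneg hr.le _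
    nlinarith
  have hprod : ∀ M L : ℝ, (2 / r * Real.exp s0) * Real.exp (-c * x ^ γ) * (Real.exp M * L)
      = 2 * L / r * Real.exp (s0 + -c * x ^ γ + M) := by
    intro M L
    have e1 : Real.exp (s0 + -c * x ^ γ + M)
        = Real.exp s0 * Real.exp (-c * x ^ γ) * Real.exp M := by
      rw [← Real.exp_add, ← Real.exp_add]
    rw [e1]; ring
  rcases hε with hε | hε
  · subst hε
    rcases le_or_gt x r with hxr | hxr
    · -- small x : interval (0, r)
      refine gaussType_step (-1) β (a := 0) (b := r)
        (m := Real.exp (-1 * r ^ β)) (Real.exp_pos _) hr ?_ ?_ ?_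
      · intro t ht
        refine ⟨?_, ht.1⟩
        rw [mem_ball, Real.dist_eq, abs_lt]
        obtain ⟨ht1, ht2⟩ := ht
        constructor <;> linarith
      · intro t ht
        apply Real.exp_le_exp.mpr
        have : t ^ β ≤ r ^ β := Real.rpow_le_rpow ht.1.le ht.2.le (by linarith)
        nlinarith
      · rw [hprod]
        apply exp_le_K_mul_exp
        · rw [sub_zero]
          rw [mul_div_assoc, div_self hr.ne']
          norm_num
        · have h1 : x ^ γ ≤ (2 * r) ^ γ :=
            Real.rpow_le_rpow hx.le (by linarith) hγ.le
          have h2 : (0:ℝ) ≤ x ^ β := Real.rpow_nonneg hx.le _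
          rw [hs0def]
          nlinarith
    · -- large x : interval (x - r, x - r/2)
      have hxr2 : 0 < x - r / 2 := by linarith
      refine gaussType_step (-1) β (a := x - r) (b := x - r / 2)
        (m := Real.exp (-1 * (x - r / 2) ^ β)) (Real.exp_pos _) (by linarith) ?_ ?_ ?_
      · intro t ht
        obtain ⟨ht1, ht2⟩ := ht
        refine ⟨?_, by simp only [Set.mem_Ioi]; linarith⟩
        rw [mem_ball, Real.dist_eq, abs_lt]
        constructor <;> linarith
      · intro t ht
        apply Real.exp_le_exp.mpr
        have : t ^ β ≤ (x - r / 2) ^ β :=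
          Real.rpow_le_rpow (by linarith [ht.1]) ht.2.le (by linarith)
        nlinarith
      · rw [hprod]
        apply exp_le_K_mul_exp
        · have h : 2 * (x - r / 2 - (x - r)) / r = 1 := by field_simp; ring
          rw [h]
        · have key := my_rpow_convex hβ hxr2 (le_of_lt (half_pos hr))
          have hsum : x - r / 2 + r / 2 = x := by ring
          rw [hsum] at key
          have hnn : (0:ℝ) ≤ (x - r / 2) ^ γ := Real.rpow_nonneg hxr2.le _
          rcases le_or_gt x (2 * r) with h2x | h2x
          · have h1 : x ^ γ ≤ (2 * r) ^ γ :=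
              Real.rpow_le_rpow hx.le h2x hγ.le
            have h6 := mul_le_mul_of_nonneg_left h1 hc0.le
            have h5 : (0:ℝ) ≤ r ^ β := Real.rpow_nonneg hr.le _
            rw [hs0def]
            nlinarith [mul_nonneg hnn (le_of_lt (half_pos hr))]
          · have hhalf : x / 2 ≤ x - r / 2 := by linarith
            have h1 : (x / 2) ^ γ ≤ (x - r / 2) ^ γ :=
              Real.rpow_le_rpow (by linarith) hhalf hγ.le
            have h2 : (x / 2) ^ γ = x ^ γ / 2 ^ γ :=
              Real.div_rpow hx.le (by norm_num) _
            have h3 : c * x ^ γ = r / 2 * (x / 2) ^ γ := by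
              rw [hcdef, h2]; ring
            have h4 := mul_le_mul_of_nonneg_left h1 (le_of_lt (half_pos hr))
            have h5 : (0:ℝ) ≤ r ^ β := Real.rpow_nonneg hr.le _
            rw [hs0def]
            nlinarith
  · subst hε
    refine gaussType_step 1 β (a := x + r / 2) (b := x + r)
      (m := Real.exp (x ^ β + x ^ γ * (r / 2))) (Real.exp_pos _) (by linarith) ?_ ?_ ?_
    · intro t ht
      obtain ⟨ht1, ht2⟩ := ht
      refine ⟨?_, by simp only [Set.mem_Ioi]; linarith⟩
      rw [mem_ball, Real.dist_eq, abs_lt]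
      constructor <;> linarith
    · intro t ht
      apply Real.exp_le_exp.mpr
      have key := my_rpow_convex hβ hx (le_of_lt (half_pos hr))
      have h1 : (x + r / 2) ^ β ≤ t ^ β :=
        Real.rpow_le_rpow (by linarith) ht.1.le (by linarith)
      nlinarith
    · rw [hprod]
      apply exp_le_K_mul_exp
      · have h : 2 * (x + r - (x + r / 2)) / r = 1 := by field_simp; ring
        rw [h]
      · have h1 : (0:ℝ) ≤ x ^ γ := Real.rpow_nonneg hx.le _
        rw [hs0def]
        nlinarith

/-- Let `μ` be the measure on `(0, ∞)` given by `dμ = e^{ε x^β} dx` with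
`β > 1` and `ε ∈ {-1, 1}`, and `d` the Euclidean distance.  Then `μ` is integrable: for every
`r > 0`, `∫ 1/μ(B(x, r)) dμ(x) < ∞`. -/
theorem gaussType_integrable (β : ℝ) (hβ : 1 < β) (ε : ℝ) (hε : ε = -1 ∨ ε = 1) :
    ∀ r : ℝ, 0 < r → ∫⁻ x, (gaussType ε β (ball x r))⁻¹ ∂(gaussType ε β) < ⊤ := by
  intro r hr
  have hγ : 0 < β - 1 := by linarith
  have h2γ : (0:ℝ) < (2:ℝ) ^ (β - 1) := Real.rpow_pos_of_pos two_pos _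
  have hc0 : 0 < r / 2 / (2:ℝ) ^ (β - 1) := by positivity
  have hmeasf : Measurable fun t : ℝ => ENNReal.ofReal (Real.exp (ε * t ^ β)) :=
    gaussType_density_meas ε β
  have heq := lintegral_withDensity_eq_lintegral_mul_non_measurable
    (volume.restrict (Set.Ioi (0:ℝ))) hmeasf
    (Filter.Eventually.of_forall fun x => ENNReal.ofReal_lt_top)
    (fun x => (gaussType ε β (ball x r))⁻¹)
  have hint : IntegrableOn
      (fun x : ℝ => (2 / r * Real.exp (r ^ β + r / 2 / (2:ℝ) ^ (β - 1) * (2 * r) ^ (β - 1))) *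
        Real.exp (-(r / 2 / (2:ℝ) ^ (β - 1)) * x ^ (β - 1))) (Set.Ioi 0) := by
    have := (my_integrableOn_exp_neg_mul_rpow hc0 hγ).const_mul
      (2 / r * Real.exp (r ^ β + r / 2 / (2:ℝ) ^ (β - 1) * (2 * r) ^ (β - 1)))
    exact this
  calc ∫⁻ x, (gaussType ε β (ball x r))⁻¹ ∂(gaussType ε β)
      = ∫⁻ x in Set.Ioi 0,
          ((fun t : ℝ => ENNReal.ofReal (Real.exp (ε * t ^ β))) *
            fun x => (gaussType ε β (ball x r))⁻¹) x ∂volume := heq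
    _ ≤ ∫⁻ x in Set.Ioi 0, ENNReal.ofReal
          ((2 / r * Real.exp (r ^ β + r / 2 / (2:ℝ) ^ (β - 1) * (2 * r) ^ (β - 1))) *
            Real.exp (-(r / 2 / (2:ℝ) ^ (β - 1)) * x ^ (β - 1))) ∂volume := by
        refine setLIntegral_mono (by fun_prop) fun x hx => ?_
        exact gaussType_pointwise β hβ ε hε hr hx
    _ < ⊤ := hint.lintegral_lt_top
end

section
/- Let (X,μ) be a measure space with μ(X) < ∞, and p, q bounded measurable exponents with 0 < ess inf p and ess inf(q - p) > 0. Then L^{q(·)}(X,μ) ⊆ L^{p(·)}(X,μ), and with t := q/p, for every u ∈ L^{q(·)}(X,μ): ‖u‖_{L^{p(·)}} ≤ 2^{1/p^-} max{‖1‖_{L^{t'(·)}}^{1/p^+}, ‖1‖_{L^{t'(·)}}^{1/p^-}} ‖u‖_{L^{q(·)}}. -/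
open MeasureTheory Metric Filter
open scoped ENNReal Topology

/-- The semi-modular of the variable exponent Lebesgue space `L^{p(·)}(X, μ)`:
`ρ_{p(·)}(u) = ∫_X |u(x)|^{p(x)} dμ(x)`. -/
noncomputable def vModular {X : Type*} [MeasurableSpace X] (μ : Measure X)
    (p : X → ℝ) (u : X → ℝ) : ℝ≥0∞ :=
  ∫⁻ x, ENNReal.ofReal (|u x| ^ p x) ∂μ

/-- The Luxemburg quasi-norm of the variable exponent Lebesgue space `L^{p(·)}(X, μ)`:
`‖u‖ = inf {λ > 0 : ρ_{p(·)}(u / λ) ≤ 1}` (with value `∞` if no such `λ` exists). -/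
noncomputable def vLux {X : Type*} [MeasurableSpace X] (μ : Measure X)
    (p : X → ℝ) (u : X → ℝ) : ℝ≥0∞ :=
  sInf {l : ℝ≥0∞ | ∃ r : ℝ, 0 < r ∧ l = ENNReal.ofReal r ∧
    vModular μ p (fun x => u x / r) ≤ 1}

/-- Membership in the variable exponent Lebesgue space `L^{p(·)}(X, μ)`:
the semi-modular of `λ u` is finite for some `λ > 0`. -/
def MemVLp {X : Type*} [MeasurableSpace X] (μ : Measure X) (p : X → ℝ) (u : X → ℝ) : Prop :=
  ∃ r : ℝ, 0 < r ∧ vModular μ p (fun x => u x / r) < ⊤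

/-- scaling estimate for the modular -/
lemma vModular_div_le {X : Type*} [MeasurableSpace X] {μ : Measure X} (e : X → ℝ) (u : X → ℝ)
    {r s c : ℝ} (hs : 0 < s) (hc : 0 ≤ c)
    (h : ∀ᵐ x ∂μ, s ^ (-(e x)) ≤ c) :
    vModular μ e (fun x => u x / (r * s)) ≤ ENNReal.ofReal c * vModular μ e (fun x => u x / r) := by
  have step : ∀ᵐ x ∂μ, ENNReal.ofReal (|u x / (r * s)| ^ e x) ≤
      ENNReal.ofReal c * ENNReal.ofReal (|u x / r| ^ e x) := by
    filter_upwards [h] with x hx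
    rw [← ENNReal.ofReal_mul hc]
    apply ENNReal.ofReal_le_ofReal
    have h1 : |u x / (r * s)| = |u x / r| / s := by
      rw [← div_div, abs_div, abs_of_pos hs]
    rw [h1, Real.div_rpow (abs_nonneg _) hs.le, div_eq_mul_inv, ← Real.rpow_neg hs.le]
    rw [mul_comm c]
    exact mul_le_mul_of_nonneg_left hx (Real.rpow_nonneg (abs_nonneg _) _)
  calc vModular μ e (fun x => u x / (r * s)) ≤
      ∫⁻ x, ENNReal.ofReal c * ENNReal.ofReal (|u x / r| ^ e x) ∂μ := lintegral_mono_ae step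
    _ = ENNReal.ofReal c * vModular μ e (fun x => u x / r) :=
      lintegral_const_mul' _ _ ENNReal.ofReal_ne_top

/-- monotonicity of the modular in the scaling parameter -/
lemma vModular_mono_div {X : Type*} [MeasurableSpace X] {μ : Measure X} {e : X → ℝ}
    (he : ∀ᵐ x ∂μ, 0 ≤ e x) (u : X → ℝ) {r r' : ℝ} (hr : 0 < r) (hrr : r ≤ r') :
    vModular μ e (fun x => u x / r') ≤ vModular μ e (fun x => u x / r) := by
  refine lintegral_mono_ae (he.mono fun x hx => ?_)
  apply ENNReal.ofReal_le_ofReal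
  apply Real.rpow_le_rpow (abs_nonneg _) _ hx
  rw [abs_div, abs_div, abs_of_pos hr, abs_of_pos (hr.trans_le hrr)]
  exact div_le_div_of_nonneg_left (abs_nonneg _) hr hrr

/-- existence of an admissible scaling parameter from finiteness of the modular -/
lemma exists_admissible {X : Type*} [MeasurableSpace X] {μ : Measure X} {e : X → ℝ} {c : ℝ}
    (hc : 0 < c) (he : ∀ᵐ x ∂μ, c ≤ e x) (u : X → ℝ) {r : ℝ} (hr : 0 < r)
    (hfin : vModular μ e (fun x => u x / r) < ⊤) :
    ∃ r' : ℝ, 0 < r' ∧ vModular μ e (fun x => u x / r') ≤ 1 := by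
  set M := vModular μ e (fun x => u x / r) with hM
  set d : ℝ := max 1 M.toReal with hd
  have hd1 : (1:ℝ) ≤ d := le_max_left _ _
  have hd0 : (0:ℝ) < d := lt_of_lt_of_le one_pos hd1
  set s : ℝ := d ^ (1 / c) with hs
  have hs1 : (1:ℝ) ≤ s := Real.one_le_rpow hd1 (by positivity)
  have hs0 : (0:ℝ) < s := lt_of_lt_of_le one_pos hs1
  refine ⟨r * s, by positivity, ?_⟩
  have hpt : ∀ᵐ x ∂μ, s ^ (-(e x)) ≤ d⁻¹ := by
    filter_upwards [he] with x hx
    have h1 : s ^ (-(e x)) ≤ s ^ (-c) :=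
      Real.rpow_le_rpow_of_exponent_le hs1 (by linarith)
    have h2 : s ^ (-c) = d⁻¹ := by
      rw [hs, ← Real.rpow_mul hd0.le, show (1 / c) * (-c) = -1 by field_simp,
        Real.rpow_neg_one]
    exact h1.trans h2.le
  calc vModular μ e (fun x => u x / (r * s)) ≤
      ENNReal.ofReal d⁻¹ * M := vModular_div_le e u hs0 (by positivity) hpt
    _ ≤ ENNReal.ofReal d⁻¹ * ENNReal.ofReal d := by
        apply mul_le_mul_right
        rw [← ENNReal.ofReal_toReal hfin.ne]
        exact ENNReal.ofReal_le_ofReal (le_max_right _ _)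
    _ = 1 := by
        rw [← ENNReal.ofReal_mul (by positivity), inv_mul_cancel₀ hd0.ne', ENNReal.ofReal_one]

/-- Hölder/Young step: bound the `p`-modular by the `q`-modular and the `t'`-modular of `1/m`. -/
lemma modular_holder {X : Type*} [MeasurableSpace X] {μ : Measure X}
    {p q : X → ℝ} (hmp : Measurable p) (hmq : Measurable q)
    {pm ε : ℝ} (hpm : 0 < pm) (hε : 0 < ε)
    (hae : ∀ᵐ x ∂μ, pm ≤ p x ∧ p x + ε ≤ q x)
    (u : X → ℝ) {r m : ℝ} (hr : 0 < r) (hm : 0 < m)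
    (hqr : vModular μ q (fun x => u x / r) ≤ 1)
    (hmod : vModular μ (fun x => (q x / p x) / (q x / p x - 1)) (fun _ => (1:ℝ) / m) ≤ 1) :
    vModular μ p (fun x => u x / r) ≤ ENNReal.ofReal (2 * m) := by
  set t' : X → ℝ := fun x => (q x / p x) / (q x / p x - 1) with ht'def
  have key : ∀ᵐ x ∂μ, ENNReal.ofReal (|u x / r| ^ p x) ≤
      ENNReal.ofReal m * (ENNReal.ofReal (|(1:ℝ) / m| ^ t' x)
        + ENNReal.ofReal (|u x / r| ^ q x)) := by
    filter_upwards [hae] with x hx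
    obtain ⟨hx1, hx2⟩ := hx
    have hpx : 0 < p x := lt_of_lt_of_le hpm hx1
    have hqx : p x < q x := by linarith
    have htx : 1 < q x / p x := (one_lt_div hpx).mpr hqx
    have hconj : (q x / p x).HolderConjugate (t' x) :=
      Real.HolderConjugate.conjExponent htx
    set A : ℝ := |u x / r| with hA
    have hA0 : 0 ≤ A := abs_nonneg _
    have young := Real.young_inequality (A ^ p x) ((1:ℝ) / m) hconj
    have h1 : |A ^ p x| = A ^ p x := abs_of_nonneg (Real.rpow_nonneg hA0 _)
    have h2 : (A ^ p x) ^ (q x / p x) = A ^ q x := by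
      rw [← Real.rpow_mul hA0]
      congr 1
      field_simp
    have h3 : A ^ p x * ((1:ℝ) / m) ≤ A ^ q x + |(1:ℝ) / m| ^ t' x := by
      calc A ^ p x * ((1:ℝ) / m)
          ≤ |A ^ p x| ^ (q x / p x) / (q x / p x) + |(1:ℝ)/m| ^ t' x / t' x := young
        _ ≤ |A ^ p x| ^ (q x / p x) + |(1:ℝ)/m| ^ t' x := by
            gcongr
            · exact div_le_self (Real.rpow_nonneg (abs_nonneg _) _) hconj.lt.le
            · exact div_le_self (Real.rpow_nonneg (abs_nonneg _) _) hconj.symm.lt.le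
        _ = A ^ q x + |(1:ℝ)/m| ^ t' x := by rw [h1, h2]
    have h4 : A ^ p x ≤ m * (|(1:ℝ)/m| ^ t' x + A ^ q x) := by
      have : A ^ p x = m * (A ^ p x * ((1:ℝ)/m)) := by field_simp
      rw [this]
      have := mul_le_mul_of_nonneg_left h3 hm.le
      linarith [this]
    calc ENNReal.ofReal (A ^ p x) ≤ ENNReal.ofReal (m * (|(1:ℝ)/m| ^ t' x + A ^ q x)) :=
        ENNReal.ofReal_le_ofReal h4
      _ = ENNReal.ofReal m * (ENNReal.ofReal (|(1:ℝ)/m| ^ t' x)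
            + ENNReal.ofReal (A ^ q x)) := by
        rw [ENNReal.ofReal_mul hm.le, ENNReal.ofReal_add (Real.rpow_nonneg (abs_nonneg _) _)
          (Real.rpow_nonneg hA0 _)]
  have hmeas : Measurable (fun x => ENNReal.ofReal (|(1:ℝ) / m| ^ t' x)) := by
    apply Measurable.ennreal_ofReal
    exact (measurable_const.pow ((hmq.div hmp).div ((hmq.div hmp).sub measurable_const)))
  calc vModular μ p (fun x => u x / r)
      ≤ ∫⁻ x, ENNReal.ofReal m * (ENNReal.ofReal (|(1:ℝ) / m| ^ t' x)
          + ENNReal.ofReal (|u x / r| ^ q x)) ∂μ := lintegral_mono_ae key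
    _ = ENNReal.ofReal m * ∫⁻ x, (ENNReal.ofReal (|(1:ℝ) / m| ^ t' x)
          + ENNReal.ofReal (|u x / r| ^ q x)) ∂μ :=
        lintegral_const_mul' _ _ ENNReal.ofReal_ne_top
    _ = ENNReal.ofReal m * ((∫⁻ x, ENNReal.ofReal (|(1:ℝ) / m| ^ t' x) ∂μ)
          + ∫⁻ x, ENNReal.ofReal (|u x / r| ^ q x) ∂μ) := by
        rw [lintegral_add_left hmeas]
    _ ≤ ENNReal.ofReal m * (1 + 1) := by
        apply mul_le_mul_right
        exact add_le_add hmod hqr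
    _ = ENNReal.ofReal (2 * m) := by
        rw [one_add_one_eq_two, ENNReal.ofReal_mul (by norm_num), ENNReal.ofReal_ofNat,
          mul_comm]
/-- Let `(X, μ)` be a measure space with `μ(X) < ∞`, and `p, q` bounded
measurable exponents with `0 < ess inf p` and `ess inf (q - p) > 0`.  Then
`L^{q(·)}(X,μ) ⊆ L^{p(·)}(X,μ)`, and with `t := q/p` and `t'` its conjugate exponent
(`t' = t/(t-1) = q/(q-p)` pointwise), for every `u ∈ L^{q(·)}(X, μ)`:
`‖u‖_{L^{p(·)}} ≤ 2^{1/p⁻} · max{‖1‖_{L^{t'(·)}}^{1/p⁺}, ‖1‖_{L^{t'(·)}}^{1/p⁻}} · ‖u‖_{L^{q(·)}}`,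
stated here for any essential bounds `pm ≤ p ≤ pp` a.e. -/
theorem vLux_embedding_of_exponent_gap
    {X : Type*} [MeasurableSpace X] (μ : Measure X) (hfin : μ Set.univ < ⊤)
    (p q : X → ℝ) (hmp : Measurable p) (hmq : Measurable q)
    (pm pp b : ℝ) (hpm : 0 < pm)
    (hbp : ∀ᵐ x ∂μ, pm ≤ p x ∧ p x ≤ pp) (hbq : ∀ᵐ x ∂μ, q x ≤ b)
    (ε : ℝ) (hε : 0 < ε) (hgap : ∀ᵐ x ∂μ, p x + ε ≤ q x) :
    ∀ u : X → ℝ, MemVLp μ q u → MemVLp μ p u ∧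
      vLux μ p u ≤ ENNReal.ofReal (2 ^ (1 / pm)) *
        max ((vLux μ (fun x => (q x / p x) / (q x / p x - 1)) (fun _ => 1)) ^ (1 / pp))
            ((vLux μ (fun x => (q x / p x) / (q x / p x - 1)) (fun _ => 1)) ^ (1 / pm)) *
        vLux μ q u := by
  intro u hu
  obtain ⟨r0, hr0, hM0⟩ := hu
  set t' : X → ℝ := fun x => (q x / p x) / (q x / p x - 1) with ht'def
  -- combined a.e. facts
  have hae : ∀ᵐ x ∂μ, pm ≤ p x ∧ p x + ε ≤ q x := by
    filter_upwards [hbp, hgap] with x h1 h3; exact ⟨h1.1, h3⟩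
  -- Part 1 : membership
  have hmem : MemVLp μ p u := by
    refine ⟨r0, hr0, ?_⟩
    have hpt : ∀ᵐ x ∂μ, ENNReal.ofReal (|u x / r0| ^ p x) ≤
        1 + ENNReal.ofReal (|u x / r0| ^ q x) := by
      filter_upwards [hae] with x hx
      obtain ⟨hx1, hx2⟩ := hx
      have hpx : (0:ℝ) ≤ p x := le_trans hpm.le hx1
      rcases le_or_gt (|u x / r0|) 1 with hle | hgt
      · calc ENNReal.ofReal (|u x / r0| ^ p x) ≤ ENNReal.ofReal 1 :=
            ENNReal.ofReal_le_ofReal (Real.rpow_le_one (abs_nonneg _) hle hpx)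
          _ = 1 := ENNReal.ofReal_one
          _ ≤ _ := le_self_add
      · refine le_add_of_nonneg_of_le zero_le (ENNReal.ofReal_le_ofReal ?_)
        exact Real.rpow_le_rpow_of_exponent_le hgt.le (by linarith)
    calc vModular μ p (fun x => u x / r0)
        ≤ ∫⁻ x, (1 + ENNReal.ofReal (|u x / r0| ^ q x)) ∂μ := lintegral_mono_ae hpt
      _ = μ Set.univ + vModular μ q (fun x => u x / r0) := by
          rw [lintegral_add_left measurable_const, lintegral_const, one_mul]; rfl
      _ < ⊤ := ENNReal.add_lt_top.mpr ⟨hfin, hM0⟩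
  refine ⟨hmem, ?_⟩
  -- trivial case : zero measure
  by_cases hμ : μ = 0
  · have hz : vLux μ p u ≤ 0 := by
      apply ENNReal.le_of_forall_pos_le_add
      intro η hη _
      rw [zero_add]
      have : vLux μ p u ≤ ENNReal.ofReal (η : ℝ) :=
        sInf_le ⟨(η : ℝ), hη, rfl, by simp [vModular, hμ]⟩
      simpa [ENNReal.ofReal_coe_nnreal] using this
    exact le_trans hz zero_le
  -- main case
  have hne : (MeasureTheory.ae μ).NeBot := MeasureTheory.ae_neBot.mpr hμ
  obtain ⟨x₀, hx₀⟩ := (hbp.and hae).exists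
  have hpp : (0:ℝ) < pp := lt_of_lt_of_le hpm (hx₀.1.1.trans hx₀.1.2)
  have hpmpp : pm ≤ pp := hx₀.1.1.trans hx₀.1.2
  set N : ℝ≥0∞ := vLux μ t' (fun _ => (1:ℝ)) with hNdef
  -- t' is a.e. ≥ 1
  have ht'1 : ∀ᵐ x ∂μ, 1 ≤ t' x := by
    filter_upwards [hae] with x hx
    have hpx : 0 < p x := lt_of_lt_of_le hpm hx.1
    have htx : 1 < q x / p x := (one_lt_div hpx).mpr (by linarith [hx.2])
    rw [ht'def, le_div_iff₀ (by linarith)]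
    linarith
  have ht'0 : ∀ᵐ x ∂μ, 0 ≤ t' x := ht'1.mono fun x hx => le_trans zero_le_one hx
  -- N is finite
  have hNtop : N ≠ ⊤ := by
    set r1 : ℝ := max 1 (μ Set.univ).toReal with hr1def
    have hr11 : (1:ℝ) ≤ r1 := le_max_left _ _
    have hr10 : (0:ℝ) < r1 := lt_of_lt_of_le one_pos hr11
    have hadm : vModular μ t' (fun x => (1:ℝ) / r1) ≤ 1 := by
      have hpt : ∀ᵐ x ∂μ, ENNReal.ofReal (|(1:ℝ) / r1| ^ t' x) ≤
          ENNReal.ofReal r1⁻¹ := by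
        filter_upwards [ht'1] with x hx
        apply ENNReal.ofReal_le_ofReal
        have h1 : |(1:ℝ) / r1| = r1⁻¹ := by
          rw [abs_div, abs_one, abs_of_pos hr10, one_div]
        rw [h1]
        calc r1⁻¹ ^ t' x ≤ r1⁻¹ ^ (1:ℝ) :=
            Real.rpow_le_rpow_of_exponent_ge (by positivity)
              (by first | exact inv_le_one_of_one_le₀ hr11 | exact inv_le_one hr11 | simp [inv_le_one_iff₀]; linarith) hx
          _ = r1⁻¹ := Real.rpow_one _
      calc vModular μ t' (fun x => (1:ℝ) / r1)
          ≤ ∫⁻ _, ENNReal.ofReal r1⁻¹ ∂μ := lintegral_mono_ae hpt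
        _ = ENNReal.ofReal r1⁻¹ * μ Set.univ := lintegral_const _
        _ ≤ ENNReal.ofReal r1⁻¹ * ENNReal.ofReal r1 := by
            apply mul_le_mul_right
            rw [← ENNReal.ofReal_toReal hfin.ne]
            exact ENNReal.ofReal_le_ofReal (le_max_right _ _)
        _ = 1 := by
            rw [← ENNReal.ofReal_mul (by positivity), inv_mul_cancel₀ hr10.ne',
              ENNReal.ofReal_one]
    exact ne_top_of_le_ne_top ENNReal.ofReal_ne_top
      (sInf_le ⟨r1, hr10, rfl, hadm⟩)
  -- claim 1 : explicit admissible scaling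
  have claim1 : ∀ r ν : ℝ, 0 < r → 0 < ν →
      vModular μ q (fun x => u x / r) ≤ 1 →
      vModular μ t' (fun x => (1:ℝ) / ν) ≤ 1 →
      vLux μ p u ≤ ENNReal.ofReal r *
        ENNReal.ofReal (2 ^ (1/pm) * max (ν ^ (1/pp)) (ν ^ (1/pm))) := by
    intro r ν hr hν hqr hνmod
    have hB : vModular μ p (fun x => u x / r) ≤ ENNReal.ofReal (2 * ν) :=
      modular_holder hmp hmq hpm hε hae u hr hν hqr hνmod
    have h2ν : (0:ℝ) < 2 * ν := by linarith
    set s : ℝ := if 1 ≤ 2 * ν then (2 * ν) ^ (1/pm) else (2 * ν) ^ (1/pp) with hsdef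
    have hs0 : 0 < s := by rw [hsdef]; split <;> positivity
    have hspt : ∀ᵐ x ∂μ, s ^ (-(p x)) ≤ (2 * ν)⁻¹ := by
      filter_upwards [hbp] with x hx
      rw [hsdef]
      split
      case isTrue h1 =>
        have hs1 : 1 ≤ (2 * ν) ^ (1/pm) := Real.one_le_rpow h1 (by positivity)
        calc ((2 * ν) ^ (1/pm)) ^ (-p x) ≤ ((2 * ν) ^ (1/pm)) ^ (-pm) :=
            Real.rpow_le_rpow_of_exponent_le hs1 (by linarith [hx.1])
          _ = (2 * ν)⁻¹ := by
            rw [← Real.rpow_mul h2ν.le, show (1/pm) * (-pm) = -1 by field_simp,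
              Real.rpow_neg_one]
      case isFalse h1 =>
        push_neg at h1
        have hs1 : (2 * ν) ^ (1/pp) ≤ 1 := Real.rpow_le_one h2ν.le h1.le (by positivity)
        calc ((2 * ν) ^ (1/pp)) ^ (-p x) ≤ ((2 * ν) ^ (1/pp)) ^ (-pp) :=
            Real.rpow_le_rpow_of_exponent_ge (by positivity) hs1 (by linarith [hx.2])
          _ = (2 * ν)⁻¹ := by
            rw [← Real.rpow_mul h2ν.le, show (1/pp) * (-pp) = -1 by field_simp,
              Real.rpow_neg_one]
    have hadm : vModular μ p (fun x => u x / (r * s)) ≤ 1 := by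
      calc vModular μ p (fun x => u x / (r * s))
          ≤ ENNReal.ofReal (2 * ν)⁻¹ * vModular μ p (fun x => u x / r) :=
            vModular_div_le p u hs0 (by positivity) hspt
        _ ≤ ENNReal.ofReal (2 * ν)⁻¹ * ENNReal.ofReal (2 * ν) := mul_le_mul_right hB _
        _ = 1 := by
            rw [← ENNReal.ofReal_mul (by positivity), inv_mul_cancel₀ h2ν.ne',
              ENNReal.ofReal_one]
    have hsle : s ≤ 2 ^ (1/pm) * max (ν ^ (1/pp)) (ν ^ (1/pm)) := by
      rw [hsdef]
      split
      case isTrue h1 =>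
        rw [Real.mul_rpow (by norm_num) hν.le]
        exact mul_le_mul_of_nonneg_left (le_max_right _ _) (by positivity)
      case isFalse h1 =>
        rw [Real.mul_rpow (by norm_num) hν.le]
        have h2 : (2:ℝ) ^ (1/pp) ≤ 2 ^ (1/pm) :=
          Real.rpow_le_rpow_of_exponent_le one_le_two (one_div_le_one_div_of_le hpm hpmpp)
        calc (2:ℝ) ^ (1/pp) * ν ^ (1/pp) ≤ 2 ^ (1/pm) * ν ^ (1/pp) :=
            mul_le_mul_of_nonneg_right h2 (by positivity)
          _ ≤ _ := mul_le_mul_of_nonneg_left (le_max_left _ _) (by positivity)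
    calc vLux μ p u ≤ ENNReal.ofReal (r * s) := sInf_le ⟨r * s, by positivity, rfl, hadm⟩
      _ = ENNReal.ofReal r * ENNReal.ofReal s := ENNReal.ofReal_mul hr.le
      _ ≤ _ := mul_le_mul_right (ENNReal.ofReal_le_ofReal hsle) _
  -- claim 2 : pass to the infimum over ν
  set n : ℝ := N.toReal with hn
  have hn0 : (0:ℝ) ≤ n := ENNReal.toReal_nonneg
  have claim2 : ∀ r : ℝ, 0 < r → vModular μ q (fun x => u x / r) ≤ 1 →
      vLux μ p u ≤ ENNReal.ofReal r *
        (ENNReal.ofReal (2 ^ (1/pm)) * max (N ^ (1/pp)) (N ^ (1/pm))) := by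
    intro r hr hqr
    have hδ : ∀ δ : ℝ, δ ∈ Set.Ioi (0:ℝ) → vLux μ p u ≤ ENNReal.ofReal r *
        ENNReal.ofReal (2 ^ (1/pm) * max ((n + δ) ^ (1/pp)) ((n + δ) ^ (1/pm))) := by
      intro δ hδ
      rw [Set.mem_Ioi] at hδ
      have hlt : N < ENNReal.ofReal (n + δ) := by
        conv_lhs => rw [← ENNReal.ofReal_toReal hNtop]
        exact (ENNReal.ofReal_lt_ofReal_iff (by linarith)).mpr (by linarith)
      obtain ⟨l, hlS, hllt⟩ := sInf_lt_iff.mp hlt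
      obtain ⟨m, hm, rfl, hmmod⟩ := hlS
      have hmlt : m < n + δ := (ENNReal.ofReal_lt_ofReal_iff (by linarith)).mp hllt
      have hνmod : vModular μ t' (fun x => (1:ℝ) / (n + δ)) ≤ 1 :=
        le_trans (vModular_mono_div ht'0 (fun _ => (1:ℝ)) hm hmlt.le) hmmod
      exact claim1 r (n + δ) hr (by linarith) hqr hνmod
    have hcont : ContinuousAt (fun δ : ℝ => ENNReal.ofReal r *
        ENNReal.ofReal (2 ^ (1/pm) * max ((n + δ) ^ (1/pp)) ((n + δ) ^ (1/pm)))) 0 := by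
      apply (ENNReal.continuous_const_mul ENNReal.ofReal_ne_top).continuousAt.comp
      apply ENNReal.continuous_ofReal.continuousAt.comp
      apply ContinuousAt.mul continuousAt_const
      have hadd : ContinuousAt (fun δ : ℝ => n + δ) 0 :=
        (continuous_const.add continuous_id).continuousAt
      have h1 : ContinuousAt (fun δ : ℝ => (n + δ) ^ (1/pp)) 0 :=
        (Real.continuousAt_rpow_const (n + 0) (1/pp) (Or.inr (by positivity))).comp hadd
      have h2 : ContinuousAt (fun δ : ℝ => (n + δ) ^ (1/pm)) 0 :=
        (Real.continuousAt_rpow_const (n + 0) (1/pm) (Or.inr (by positivity))).comp hadd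
      exact h1.max h2
    have htend := hcont.tendsto.mono_left (nhdsWithin_le_nhds (s := Set.Ioi (0:ℝ)))
    have hle := ge_of_tendsto htend (eventually_nhdsWithin_of_forall hδ)
    simp only [add_zero] at hle
    have hconv : ENNReal.ofReal (2 ^ (1/pm) * max (n ^ (1/pp)) (n ^ (1/pm))) =
        ENNReal.ofReal (2 ^ (1/pm)) * max (N ^ (1/pp)) (N ^ (1/pm)) := by
      rw [ENNReal.ofReal_mul (by positivity)]
      congr 1
      have hmono : Monotone (ENNReal.ofReal) := fun a b h => ENNReal.ofReal_le_ofReal h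
      rw [hmono.map_max, ← ENNReal.ofReal_rpow_of_nonneg hn0 (by positivity),
        ← ENNReal.ofReal_rpow_of_nonneg hn0 (by positivity), hn, ENNReal.ofReal_toReal hNtop]
    rw [hconv] at hle
    exact hle
  -- final assembly
  set C : ℝ≥0∞ := ENNReal.ofReal (2 ^ (1 / pm)) * max (N ^ (1 / pp)) (N ^ (1 / pm)) with hC
  obtain ⟨rq, hrq, hrqmod⟩ := exists_admissible (show (0:ℝ) < pm + ε by linarith)
    (hae.mono fun x hx => by linarith [hx.1, hx.2]) u hr0 hM0
  by_cases hC0 : C = 0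
  · have hL : vLux μ p u ≤ 0 := by
      have h := claim2 rq hrq hrqmod
      rw [hC0, mul_zero] at h
      exact h
    exact le_trans hL zero_le
  · have hCtop : C ≠ ⊤ := by
      apply ENNReal.mul_ne_top ENNReal.ofReal_ne_top
      exact (max_lt (ENNReal.rpow_lt_top_of_nonneg (by positivity) hNtop)
        (ENNReal.rpow_lt_top_of_nonneg (by positivity) hNtop)).ne
    have hdiv : vLux μ p u / C ≤ vLux μ q u := by
      refine le_sInf ?_
      rintro l ⟨r, hr, rfl, hrmod⟩
      rw [ENNReal.div_le_iff_le_mul (Or.inl hC0) (Or.inl hCtop)]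
      exact claim2 r hr hrmod
    have hfinal : vLux μ p u ≤ vLux μ q u * C :=
      (ENNReal.div_le_iff_le_mul (Or.inl hC0) (Or.inl hCtop)).mp hdiv
    calc vLux μ p u ≤ vLux μ q u * C := hfinal
      _ = C * vLux μ q u := mul_comm _ _
end

section
/- Let (X,μ) be a measure space and p a bounded measurable exponent with p^- > 0. Then for every u ∈ L^{p(·)}(X,μ): min{ρ(u)^{1/p^-}, ρ(u)^{1/p^+}} ≤ ‖u‖_{L^{p(·)}} ≤ max{ρ(u)^{1/p^-}, ρ(u)^{1/p^+}}, where ρ(u) = ∫_X |u(x)|^{p(x)} dμ(x). In particular ‖u‖ ≤ 1 if and only if ρ(u) ≤ 1. -/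
open MeasureTheory Metric Filter
open scoped ENNReal Topology

/-- Scaling estimates for the modular: if `c ≤ r ^ p x ≤ C` a.e., then
`ofReal c * ρ(u/r) ≤ ρ(u) ≤ ofReal C * ρ(u/r)`. -/
lemma vscale {X : Type*} [MeasurableSpace X] (μ : Measure X) (p u : X → ℝ)
    (r : ℝ) (hr : 0 < r) (c C : ℝ)
    (h : ∀ᵐ x ∂μ, c ≤ r ^ p x ∧ r ^ p x ≤ C) :
    ENNReal.ofReal c * vModular μ p (fun x => u x / r) ≤ vModular μ p u ∧
    vModular μ p u ≤ ENNReal.ofReal C * vModular μ p (fun x => u x / r) := by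
  have key : ∀ x : X, ENNReal.ofReal (|u x / r| ^ p x) * ENNReal.ofReal (r ^ p x)
      = ENNReal.ofReal (|u x| ^ p x) := by
    intro x
    rw [← ENNReal.ofReal_mul (by positivity)]
    congr 1
    rw [abs_div, abs_of_pos hr, Real.div_rpow (abs_nonneg _) hr.le,
      div_mul_cancel₀ _ (Real.rpow_pos_of_pos hr _).ne']
  unfold vModular
  constructor
  · rw [← lintegral_const_mul' _ _ ENNReal.ofReal_ne_top]
    refine lintegral_mono_ae ?_
    filter_upwards [h] with x hx
    calc ENNReal.ofReal c * ENNReal.ofReal (|u x / r| ^ p x)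
        = ENNReal.ofReal (|u x / r| ^ p x) * ENNReal.ofReal c := mul_comm _ _
      _ ≤ ENNReal.ofReal (|u x / r| ^ p x) * ENNReal.ofReal (r ^ p x) :=
          mul_le_mul_right (ENNReal.ofReal_le_ofReal hx.1) _
      _ = ENNReal.ofReal (|u x| ^ p x) := key x
  · rw [← lintegral_const_mul' _ _ ENNReal.ofReal_ne_top]
    refine lintegral_mono_ae ?_
    filter_upwards [h] with x hx
    calc ENNReal.ofReal (|u x| ^ p x)
        = ENNReal.ofReal (|u x / r| ^ p x) * ENNReal.ofReal (r ^ p x) := (key x).symm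
      _ ≤ ENNReal.ofReal (|u x / r| ^ p x) * ENNReal.ofReal C :=
          mul_le_mul_right (ENNReal.ofReal_le_ofReal hx.2) _
      _ = ENNReal.ofReal C * ENNReal.ofReal (|u x / r| ^ p x) := mul_comm _ _

/-- Let `(X, μ)` be a measure space and `p` a bounded measurable exponent
with `p⁻ > 0`.  Then for every `u ∈ L^{p(·)}(X, μ)`:
`min{ρ(u)^{1/p⁻}, ρ(u)^{1/p⁺}} ≤ ‖u‖_{L^{p(·)}} ≤ max{ρ(u)^{1/p⁻}, ρ(u)^{1/p⁺}}`,
where `ρ(u) = ∫_X |u(x)|^{p(x)} dμ(x)`; in particular `‖u‖ ≤ 1 ↔ ρ(u) ≤ 1`.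
Stated for any essential bounds `pm ≤ p ≤ pp` a.e. -/
theorem vLux_modular_bounds
    {X : Type*} [MeasurableSpace X] (μ : Measure X)
    (p : X → ℝ) (hmp : Measurable p)
    (pm pp : ℝ) (hpm : 0 < pm) (hbp : ∀ᵐ x ∂μ, pm ≤ p x ∧ p x ≤ pp)
    (u : X → ℝ) (hmem : MemVLp μ p u) :
    (min ((vModular μ p u) ^ (1 / pm)) ((vModular μ p u) ^ (1 / pp)) ≤ vLux μ p u ∧
      vLux μ p u ≤ max ((vModular μ p u) ^ (1 / pm)) ((vModular μ p u) ^ (1 / pp))) ∧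
    (vLux μ p u ≤ 1 ↔ vModular μ p u ≤ 1) := by
  -- membership in the defining set of the Luxemburg norm
  have hmemS : ∀ r : ℝ, 0 < r → vModular μ p (fun x => u x / r) ≤ 1 →
      vLux μ p u ≤ ENNReal.ofReal r := fun r hr h => sInf_le ⟨r, hr, rfl, h⟩
  -- uniform a.e. bounds on `r ^ p x`
  have hbnd : ∀ r : ℝ, 0 < r → ∀ᵐ x ∂μ,
      min (r ^ pm) (r ^ pp) ≤ r ^ p x ∧ r ^ p x ≤ max (r ^ pm) (r ^ pp) := by
    intro r hr
    filter_upwards [hbp] with x hx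
    rcases le_total 1 r with h1 | h1
    · exact ⟨(min_le_left _ _).trans (Real.rpow_le_rpow_of_exponent_le h1 hx.1),
        (Real.rpow_le_rpow_of_exponent_le h1 hx.2).trans (le_max_right _ _)⟩
    · exact ⟨(min_le_right _ _).trans (Real.rpow_le_rpow_of_exponent_ge hr h1 hx.2),
        (Real.rpow_le_rpow_of_exponent_ge hr h1 hx.1).trans (le_max_left _ _)⟩
  have hscale := fun (r : ℝ) (hr : 0 < r) =>
    vscale μ p u r hr (min (r ^ pm) (r ^ pp)) (max (r ^ pm) (r ^ pp)) (hbnd r hr)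
  -- the modular is finite
  obtain ⟨r₀, hr₀, hfin0⟩ := hmem
  have hfin : vModular μ p u ≠ ⊤ := by
    refine ne_top_of_le_ne_top ?_ (hscale r₀ hr₀).2
    exact ENNReal.mul_ne_top ENNReal.ofReal_ne_top hfin0.ne
  rcases eq_or_ne (vModular μ p u) 0 with h0 | h0
  · -- trivial case: zero modular
    have hmod0 : ∀ r : ℝ, 0 < r → vModular μ p (fun x => u x / r) = 0 := by
      intro r hr
      have h1 := (hscale r hr).1
      rw [h0, le_zero_iff, mul_eq_zero] at h1
      rcases h1 with h1 | h1
      · exact absurd h1 (by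
          have : (0:ℝ) < min (r ^ pm) (r ^ pp) :=
            lt_min (Real.rpow_pos_of_pos hr _) (Real.rpow_pos_of_pos hr _)
          simpa [ENNReal.ofReal_eq_zero, not_le] using this)
      · exact h1
    have hN : vLux μ p u = 0 := by
      refine le_antisymm ?_ zero_le
      refine ENNReal.le_of_forall_pos_le_add fun ε hε _ => ?_
      have := hmemS ε (by exact_mod_cast hε)
        (((hmod0 ε (by exact_mod_cast hε)).le).trans zero_le_one)
      simpa [ENNReal.ofReal_coe_nnreal] using this
    refine ⟨⟨?_, ?_⟩, ?_⟩
    · rw [h0, hN]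
      exact (min_le_left _ _).trans (le_of_eq (ENNReal.zero_rpow_of_pos (by positivity)))
    · rw [hN]; exact zero_le
    · rw [h0, hN]
  · -- main case: `0 < ρ < ∞`
    have hμ : μ ≠ 0 := by
      intro hμ0
      apply h0
      simp [vModular, hμ0]
    haveI : (ae μ).NeBot := ae_neBot.mpr hμ
    obtain ⟨x₀, hx₀⟩ := hbp.exists
    have hpmpp : pm ≤ pp := hx₀.1.trans hx₀.2
    have hpp : 0 < pp := hpm.trans_le hpmpp
    set a := (vModular μ p u).toReal with ha_def
    have ha : 0 < a := ENNReal.toReal_pos h0 hfin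
    have hρa : vModular μ p u = ENNReal.ofReal a := (ENNReal.ofReal_toReal hfin).symm
    -- lower bound
    have hlow : min ((vModular μ p u) ^ (1 / pm)) ((vModular μ p u) ^ (1 / pp))
        ≤ vLux μ p u := by
      refine le_sInf ?_
      rintro l ⟨r, hr, rfl, hle⟩
      rcases le_total 1 r with h1 | h1
      · -- r ≥ 1 : ρ ≤ r^pp ⇒ ρ^{1/pp} ≤ r
        have hmax : max (r ^ pm) (r ^ pp) = r ^ pp :=
          max_eq_right (Real.rpow_le_rpow_of_exponent_le h1 hpmpp)
        have h2 : vModular μ p u ≤ ENNReal.ofReal (r ^ pp) := by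
          calc vModular μ p u ≤ ENNReal.ofReal (max (r ^ pm) (r ^ pp)) *
              vModular μ p (fun x => u x / r) := (hscale r hr).2
            _ ≤ ENNReal.ofReal (r ^ pp) * 1 := by
                rw [hmax]; exact mul_le_mul_right hle _
            _ = ENNReal.ofReal (r ^ pp) := mul_one _
        refine (min_le_right _ _).trans ?_
        calc (vModular μ p u) ^ (1 / pp)
            ≤ (ENNReal.ofReal (r ^ pp)) ^ (1 / pp) :=
              ENNReal.rpow_le_rpow h2 (by positivity)
          _ = ENNReal.ofReal r := by
              rw [ENNReal.ofReal_rpow_of_pos (Real.rpow_pos_of_pos hr _),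
                ← Real.rpow_mul hr.le, mul_one_div_cancel hpp.ne', Real.rpow_one]
      · -- r ≤ 1 : ρ ≤ r^pm ⇒ ρ^{1/pm} ≤ r
        have hmax : max (r ^ pm) (r ^ pp) = r ^ pm :=
          max_eq_left (Real.rpow_le_rpow_of_exponent_ge hr h1 hpmpp)
        have h2 : vModular μ p u ≤ ENNReal.ofReal (r ^ pm) := by
          calc vModular μ p u ≤ ENNReal.ofReal (max (r ^ pm) (r ^ pp)) *
              vModular μ p (fun x => u x / r) := (hscale r hr).2
            _ ≤ ENNReal.ofReal (r ^ pm) * 1 := by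
                rw [hmax]; exact mul_le_mul_right hle _
            _ = ENNReal.ofReal (r ^ pm) := mul_one _
        refine (min_le_left _ _).trans ?_
        calc (vModular μ p u) ^ (1 / pm)
            ≤ (ENNReal.ofReal (r ^ pm)) ^ (1 / pm) :=
              ENNReal.rpow_le_rpow h2 (by positivity)
          _ = ENNReal.ofReal r := by
              rw [ENNReal.ofReal_rpow_of_pos (Real.rpow_pos_of_pos hr _),
                ← Real.rpow_mul hr.le, mul_one_div_cancel hpm.ne', Real.rpow_one]
    -- upper bound
    have hup : vLux μ p u ≤
        max ((vModular μ p u) ^ (1 / pm)) ((vModular μ p u) ^ (1 / pp)) := by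
      rcases le_total a 1 with h1 | h1
      · -- a ≤ 1 : take r = a^{1/pp} ≤ 1
        set r := a ^ (1 / pp) with hr_def
        have hr : 0 < r := Real.rpow_pos_of_pos ha _
        have hr1 : r ≤ 1 := Real.rpow_le_one ha.le h1 (by positivity)
        have hrpp : r ^ pp = a := by
          rw [hr_def, ← Real.rpow_mul ha.le, one_div_mul_cancel hpp.ne', Real.rpow_one]
        have hminr : min (r ^ pm) (r ^ pp) = r ^ pp :=
          min_eq_right (Real.rpow_le_rpow_of_exponent_ge hr hr1 hpmpp)
        have hc := (hscale r hr).1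
        rw [hminr, hrpp, ← hρa] at hc
        have hmod1 : vModular μ p (fun x => u x / r) ≤ 1 := by
          rw [hρa] at hc
          exact (ENNReal.mul_le_mul_iff_right (a := ENNReal.ofReal a)
            (by simpa [ENNReal.ofReal_eq_zero, not_le] using ha) ENNReal.ofReal_ne_top).mp
            (by rw [mul_one]; exact hc)
        refine (hmemS r hr hmod1).trans ?_
        refine le_trans (le_of_eq ?_) (le_max_right _ _)
        rw [hρa, ENNReal.ofReal_rpow_of_pos ha]
      · -- a ≥ 1 : take r = a^{1/pm} ≥ 1
        set r := a ^ (1 / pm) with hr_def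
        have hr : 0 < r := Real.rpow_pos_of_pos ha _
        have hr1 : 1 ≤ r := Real.one_le_rpow h1 (by positivity)
        have hrpm : r ^ pm = a := by
          rw [hr_def, ← Real.rpow_mul ha.le, one_div_mul_cancel hpm.ne', Real.rpow_one]
        have hminr : min (r ^ pm) (r ^ pp) = r ^ pm :=
          min_eq_left (Real.rpow_le_rpow_of_exponent_le hr1 hpmpp)
        have hc := (hscale r hr).1
        rw [hminr, hrpm, ← hρa] at hc
        have hmod1 : vModular μ p (fun x => u x / r) ≤ 1 := by
          rw [hρa] at hc
          exact (ENNReal.mul_le_mul_iff_right (a := ENNReal.ofReal a)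
            (by simpa [ENNReal.ofReal_eq_zero, not_le] using ha) ENNReal.ofReal_ne_top).mp
            (by rw [mul_one]; exact hc)
        refine (hmemS r hr hmod1).trans ?_
        refine le_trans (le_of_eq ?_) (le_max_left _ _)
        rw [hρa, ENNReal.ofReal_rpow_of_pos ha]
    refine ⟨⟨hlow, hup⟩, ?_, ?_⟩
    · -- ‖u‖ ≤ 1 → ρ ≤ 1
      intro hN
      by_contra hgt
      push_neg at hgt
      have h1 : (1 : ℝ≥0∞) < min ((vModular μ p u) ^ (1 / pm))
          ((vModular μ p u) ^ (1 / pp)) :=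
        lt_min (ENNReal.one_lt_rpow hgt (by positivity))
          (ENNReal.one_lt_rpow hgt (by positivity))
      exact absurd (h1.trans_le (hlow.trans hN)) (lt_irrefl _)
    · -- ρ ≤ 1 → ‖u‖ ≤ 1
      intro hρ
      have : vModular μ p (fun x => u x / 1) ≤ 1 := by
        simpa [div_one] using hρ
      simpa using hmemS 1 one_pos this
end

section
/- Let (X,d) be a metric space, B = B(z,r) with r ∈ (0,∞), and t : B → (0,∞) bounded with 1/t locally log-Hölder continuous. Then r^{1/t_B^+ - 1/t_B^-} ≤ e^{C_{log}(1/t)} · 2^{1/t_B^- - 1/t_B^+}. -/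
open Metric

/-- Let `(X, d)` be a metric space, `B = B(z, r)` with `r ∈ (0, ∞)`, and
`t : B → (0, ∞)` bounded with `1/t` locally log-Hölder continuous with constant `C`.  Then
`r^{1/t_B⁺ - 1/t_B⁻} ≤ e^{C} · 2^{1/t_B⁻ - 1/t_B⁺}`,
where `t_B⁻ = inf_B t` and `t_B⁺ = sup_B t`. -/
theorem logHolder_radius_bound
    {X : Type*} [MetricSpace X] (z : X) (r : ℝ) (hr : 0 < r)
    (t : X → ℝ) (htpos : ∀ x ∈ ball z r, 0 < t x)
    (T : ℝ) (htbd : ∀ x ∈ ball z r, t x ≤ T)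
    (C : ℝ) (hC : 0 < C)
    (hlog : ∀ x ∈ ball z r, ∀ y ∈ ball z r,
      |1 / t x - 1 / t y| ≤ C / Real.log (Real.exp 1 + 1 / dist x y)) :
    r ^ (1 / sSup (t '' ball z r) - 1 / sInf (t '' ball z r)) ≤
      Real.exp C * 2 ^ (1 / sInf (t '' ball z r) - 1 / sSup (t '' ball z r)) := by
  have hzB : z ∈ ball z r := mem_ball_self hr
  set S := t '' ball z r with hS
  have hne : S.Nonempty := ⟨t z, z, hzB, rfl⟩
  have hbdd : BddAbove S := ⟨T, by rintro _ ⟨x, hx, rfl⟩; exact htbd x hx⟩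
  have hbddb : BddBelow S := ⟨0, by rintro _ ⟨x, hx, rfl⟩; exact (htpos x hx).le⟩
  set sP := sSup S with hsPdef
  set sM := sInf S with hsMdef
  have hsP : 0 < sP := lt_of_lt_of_le (htpos z hzB) (le_csSup hbdd ⟨z, hzB, rfl⟩)
  have h2r : (0:ℝ) < 2 * r := by linarith
  set L := Real.log (Real.exp 1 + 1 / (2 * r)) with hLdef
  have hL1 : (1:ℝ) ≤ L := by
    rw [hLdef, Real.le_log_iff_exp_le (by positivity)]
    have : 0 ≤ 1 / (2 * r) := by positivity
    linarith
  have hLpos : 0 < L := lt_of_lt_of_le one_pos hL1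
  set M := C / L with hMdef
  have hM0 : 0 < M := div_pos hC hLpos
  -- pairwise oscillation bound
  have hpair : ∀ x ∈ ball z r, ∀ y ∈ ball z r, 1 / t x - 1 / t y ≤ M := by
    intro x hx y hy
    rcases eq_or_ne x y with rfl | hxy
    · simpa using hM0.le
    · have hd : 0 < dist x y := dist_pos.2 hxy
      have hd2 : dist x y < 2 * r := by
        have h1 : dist x z < r := mem_ball.mp hx
        have h2 : dist y z < r := mem_ball.mp hy
        have h3 : dist x y ≤ dist x z + dist z y := dist_triangle x z y
        have h4 : dist z y = dist y z := dist_comm z y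
        linarith
      calc 1 / t x - 1 / t y ≤ |1 / t x - 1 / t y| := le_abs_self _
        _ ≤ C / Real.log (Real.exp 1 + 1 / dist x y) := hlog x hx y hy
        _ ≤ M := by
            rw [hMdef, hLdef]
            apply div_le_div_of_nonneg_left hC.le hLpos
            apply Real.log_le_log (by positivity)
            have : 1 / (2 * r) ≤ 1 / dist x y := one_div_le_one_div_of_le hd hd2.le
            linarith
  -- key: 1/t x ≤ 1/sP + M
  have hkey : ∀ x ∈ ball z r, 1 / t x ≤ 1 / sP + M := by
    intro x hx
    by_cases h : 1 / t x - M ≤ 0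
    · have : 0 < 1 / sP := by positivity
      linarith
    · push_neg at h
      have hub : sP ≤ 1 / (1 / t x - M) := by
        apply csSup_le hne
        rintro _ ⟨y, hy, rfl⟩
        rw [le_div_iff₀ h]
        have h1 := hpair x hx y hy
        have hty := htpos y hy
        have hcancel : t y * (1 / t y) = 1 := by field_simp
        nlinarith
      have h2 : sP * (1 / t x - M) ≤ 1 := (le_div_iff₀ h).mp hub
      have h3 : (1 / t x - M) * sP ≤ 1 := by linarith [mul_comm sP (1 / t x - M)]
      have h4 : 1 / t x - M ≤ 1 / sP := (le_div_iff₀ hsP).mpr h3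
      linarith
  have hK : 0 < 1 / sP + M := by positivity
  have hsMlb : 1 / (1 / sP + M) ≤ sM := by
    apply le_csInf hne
    rintro _ ⟨x, hx, rfl⟩
    exact (one_div_le (htpos x hx) hK).mp (hkey x hx)
  have hsM0 : 0 < sM := lt_of_lt_of_le (by positivity) hsMlb
  have hdM : 1 / sM - 1 / sP ≤ M := by
    have h1 : 1 / sM ≤ 1 / (1 / (1 / sP + M)) :=
      one_div_le_one_div_of_le (by positivity) hsMlb
    rw [one_div_one_div] at h1
    linarith
  have hd0 : 0 ≤ 1 / sM - 1 / sP := by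
    have hle : sM ≤ sP := csInf_le_csSup hne hbddb hbdd
    have := one_div_le_one_div_of_le hsM0 hle
    linarith
  set δ := 1 / sM - 1 / sP with hδdef
  clear_value δ
  have key2 : (2 * r) ^ (-δ) ≤ Real.exp C := by
    rw [Real.rpow_def_of_pos h2r, Real.exp_le_exp]
    rcases le_or_gt 0 (Real.log (2 * r)) with h | h
    · nlinarith
    · have hL2 : Real.log (1 / (2 * r)) ≤ L := by
        rw [hLdef]
        apply Real.log_le_log (by positivity)
        have := (Real.exp_pos 1).le
        linarith
      have hlog1 : Real.log (1 / (2 * r)) = -Real.log (2 * r) := by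
        rw [one_div, Real.log_inv]
      have hM' : δ * L ≤ C := by
        have := (le_div_iff₀ hLpos).mp hdM
        linarith
      have hp : δ * Real.log (1 / (2 * r)) ≤ δ * L := mul_le_mul_of_nonneg_left hL2 hd0
      have heq : Real.log (2 * r) * (-δ) = δ * Real.log (1 / (2 * r)) := by
        rw [hlog1]; ring
      rw [heq]; linarith
  have hexp : 1 / sP - 1 / sM = -δ := by rw [hδdef]; ring
  rw [hexp]
  have h2pow : (2:ℝ) ^ (-δ) * (2:ℝ) ^ δ = 1 := by
    rw [← Real.rpow_add two_pos]; simp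
  have hsplit : r ^ (-δ) = (2 * r) ^ (-δ) * 2 ^ δ := by
    rw [Real.mul_rpow (by norm_num : (0:ℝ) ≤ 2) hr.le,
      mul_comm ((2:ℝ) ^ (-δ)) (r ^ (-δ)), mul_assoc, h2pow, mul_one]
  rw [hsplit]
  exact mul_le_mul_of_nonneg_right key2 (by positivity)
end

section
/- Let u : ℝⁿ → ℝ be defined by u(x) = 1 for |x| < 1, u(x) = 2 - |x| for 1 ≤ |x| < 2, and u(x) = 0 for |x| ≥ 2. Let s : ℝⁿ → (0,1] be a measurable exponent with 0 < s^- ≤ s^+ ≤ 1. For τ > 0 and σ ∈ ℝ, set u_{τ,σ}(x) := τ^σ u(τx). Then g_{τ,σ}(x) := 2 τ^{σ + s(x)} χ_{B(0,2/τ)}(x) satisfies |u_{τ,σ}(x) - u_{τ,σ}(y)| ≤ |x-y|^{s(x)} g_{τ,σ}(x) + |x-y|^{s(y)} g_{τ,σ}(y) for all x,y ∈ ℝⁿ. -/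
open Metric

/-- The standard cutoff function on `ℝⁿ`: `1` on `B(0,1)`, `2 - |x|` on `B(0,2) \ B(0,1)`,
and `0` outside `B(0,2)`. -/
noncomputable def stdCutoff {n : ℕ} (x : EuclideanSpace ℝ (Fin n)) : ℝ :=
  if ‖x‖ < 1 then 1 else if ‖x‖ < 2 then 2 - ‖x‖ else 0

lemma stdCutoff_eq {n : ℕ} (x : EuclideanSpace ℝ (Fin n)) :
    stdCutoff x = max 0 (min 1 (2 - ‖x‖)) := by
  unfold stdCutoff
  split_ifs with h1 h2
  · rw [min_eq_left (by linarith), max_eq_right (by norm_num)]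
  · rw [min_eq_right (by linarith), max_eq_right (by linarith)]
  · rw [min_eq_right (by linarith), max_eq_left (by linarith)]

lemma stdCutoff_mem_Icc {n : ℕ} (x : EuclideanSpace ℝ (Fin n)) :
    stdCutoff x ∈ Set.Icc (0 : ℝ) 1 := by
  rw [stdCutoff_eq]
  constructor
  · exact le_max_left _ _
  · exact max_le (by norm_num) (min_le_left _ _)

lemma stdCutoff_lipschitz {n : ℕ} (x y : EuclideanSpace ℝ (Fin n)) :
    |stdCutoff x - stdCutoff y| ≤ ‖x - y‖ := by
  rw [stdCutoff_eq, stdCutoff_eq, max_comm 0 (min 1 (2 - ‖x‖)), max_comm 0 (min 1 (2 - ‖y‖))]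
  calc |max (min 1 (2 - ‖x‖)) 0 - max (min 1 (2 - ‖y‖)) 0|
      ≤ |min 1 (2 - ‖x‖) - min 1 (2 - ‖y‖)| := abs_max_sub_max_le_abs _ _ _
    _ ≤ max |(1:ℝ) - 1| |(2 - ‖x‖) - (2 - ‖y‖)| := abs_min_sub_min_le_max _ _ _ _
    _ = |(2 - ‖x‖) - (2 - ‖y‖)| := by simp
    _ = |‖y‖ - ‖x‖| := by ring_nf
    _ ≤ ‖y - x‖ := abs_norm_sub_norm_le _ _
    _ = ‖x - y‖ := norm_sub_rev _ _

lemma stdCutoff_zero_of_two_le {n : ℕ} (x : EuclideanSpace ℝ (Fin n)) (h : 2 ≤ ‖x‖) :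
    stdCutoff x = 0 := by
  unfold stdCutoff
  rw [if_neg (by linarith), if_neg (by linarith)]

lemma min_le_two_rpow {t s : ℝ} (ht : 0 ≤ t) (hs : 0 < s) (hs1 : s ≤ 1) :
    min t 1 ≤ 2 * t ^ s := by
  rcases eq_or_lt_of_le ht with h0 | h0
  · rw [← h0, Real.zero_rpow hs.ne']
    simp
  rcases le_or_gt t 1 with h1 | h1
  · rw [min_eq_left h1]
    have : t = t ^ (1 : ℝ) := (Real.rpow_one t).symm
    have h2 : t ^ (1 : ℝ) ≤ t ^ s := Real.rpow_le_rpow_of_exponent_ge h0 h1 hs1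
    rw [Real.rpow_one] at h2
    linarith [Real.rpow_nonneg ht s]
  · rw [min_eq_right h1.le]
    have h2 : (1 : ℝ) = (1 : ℝ) ^ s := (Real.one_rpow s).symm
    have h3 : (1 : ℝ) ^ s ≤ t ^ s := Real.rpow_le_rpow (by norm_num) h1.le hs.le
    nlinarith [Real.rpow_nonneg ht s]

/-- The one-sided main bound, valid unconditionally. -/
lemma main_bound {n : ℕ} (τ : ℝ) (hτ : 0 < τ) (σ : ℝ) (sx : ℝ) (hsx : 0 < sx) (hsx1 : sx ≤ 1)
    (x y : EuclideanSpace ℝ (Fin n)) :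
    |τ ^ σ * stdCutoff (τ • x) - τ ^ σ * stdCutoff (τ • y)| ≤
      ‖x - y‖ ^ sx * (2 * τ ^ (σ + sx)) := by
  have hτσ : (0 : ℝ) < τ ^ σ := Real.rpow_pos_of_pos hτ σ
  have hd : |stdCutoff (τ • x) - stdCutoff (τ • y)| ≤ min (τ * ‖x - y‖) 1 := by
    refine le_min ?_ ?_
    · have := stdCutoff_lipschitz (τ • x) (τ • y)
      calc |stdCutoff (τ • x) - stdCutoff (τ • y)| ≤ ‖τ • x - τ • y‖ := this
        _ = τ * ‖x - y‖ := by
            rw [← smul_sub, norm_smul, Real.norm_eq_abs, abs_of_pos hτ]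
    · have hx := stdCutoff_mem_Icc (τ • x)
      have hy := stdCutoff_mem_Icc (τ • y)
      rw [abs_le]
      constructor <;> [linarith [hx.1, hy.2]; linarith [hx.2, hy.1]]
  have hmin : min (τ * ‖x - y‖) 1 ≤ 2 * (τ * ‖x - y‖) ^ sx :=
    min_le_two_rpow (by positivity) hsx hsx1
  have hmul : (τ * ‖x - y‖) ^ sx = τ ^ sx * ‖x - y‖ ^ sx :=
    Real.mul_rpow hτ.le (norm_nonneg _)
  calc |τ ^ σ * stdCutoff (τ • x) - τ ^ σ * stdCutoff (τ • y)|
      = τ ^ σ * |stdCutoff (τ • x) - stdCutoff (τ • y)| := by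
        rw [← mul_sub, abs_mul, abs_of_pos hτσ]
    _ ≤ τ ^ σ * (2 * (τ * ‖x - y‖) ^ sx) := by
        apply mul_le_mul_of_nonneg_left _ hτσ.le
        exact le_trans hd hmin
    _ = ‖x - y‖ ^ sx * (2 * τ ^ (σ + sx)) := by
        rw [hmul, Real.rpow_add hτ]; ring

/-- Let `u` be the standard cutoff on `ℝⁿ` and `s : ℝⁿ → (0, 1]` a
measurable exponent with `0 < s⁻ ≤ s⁺ ≤ 1`.  For `τ > 0`, `σ ∈ ℝ`, set
`u_{τ,σ}(x) := τ^σ u(τ x)`.  Then `g_{τ,σ}(x) := 2 τ^{σ + s(x)} χ_{B(0, 2/τ)}(x)` satisfies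
`|u_{τ,σ}(x) - u_{τ,σ}(y)| ≤ |x-y|^{s(x)} g_{τ,σ}(x) + |x-y|^{s(y)} g_{τ,σ}(y)`
for all `x, y ∈ ℝⁿ`, i.e. it is a scalar `s(·)`-gradient of `u_{τ,σ}`. -/
theorem stdCutoff_scaled_gradient {n : ℕ}
    (s : EuclideanSpace ℝ (Fin n) → ℝ) (hms : Measurable s)
    (a : ℝ) (ha : 0 < a) (hsa : ∀ x, a ≤ s x) (hs1 : ∀ x, s x ≤ 1)
    (τ : ℝ) (hτ : 0 < τ) (σ : ℝ) :
    ∀ x y : EuclideanSpace ℝ (Fin n),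
      |τ ^ σ * stdCutoff (τ • x) - τ ^ σ * stdCutoff (τ • y)| ≤
        ‖x - y‖ ^ s x *
          (2 * τ ^ (σ + s x) *
            Set.indicator (ball (0 : EuclideanSpace ℝ (Fin n)) (2 / τ)) (fun _ => (1 : ℝ)) x) +
        ‖x - y‖ ^ s y *
          (2 * τ ^ (σ + s y) *
            Set.indicator (ball (0 : EuclideanSpace ℝ (Fin n)) (2 / τ)) (fun _ => (1 : ℝ)) y) := by
  intro x y
  have hsx : 0 < s x := lt_of_lt_of_le ha (hsa x)
  have hsy : 0 < s y := lt_of_lt_of_le ha (hsa y)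
  have hterm : ∀ (r : ℝ), 0 ≤ r → ∀ z : EuclideanSpace ℝ (Fin n),
      0 ≤ r ^ s z * (2 * τ ^ (σ + s z) *
        Set.indicator (ball (0 : EuclideanSpace ℝ (Fin n)) (2 / τ)) (fun _ => (1 : ℝ)) z) := by
    intro r hr z
    have : (0:ℝ) ≤ Set.indicator (ball (0 : EuclideanSpace ℝ (Fin n)) (2 / τ))
        (fun _ => (1 : ℝ)) z := Set.indicator_nonneg (fun _ _ => by norm_num) z
    positivity
  by_cases hx : x ∈ ball (0 : EuclideanSpace ℝ (Fin n)) (2 / τ)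
  · rw [Set.indicator_of_mem hx]
    calc |τ ^ σ * stdCutoff (τ • x) - τ ^ σ * stdCutoff (τ • y)|
        ≤ ‖x - y‖ ^ s x * (2 * τ ^ (σ + s x)) :=
          main_bound τ hτ σ (s x) hsx (hs1 x) x y
      _ = ‖x - y‖ ^ s x * (2 * τ ^ (σ + s x) * 1) := by ring
      _ ≤ _ := le_add_of_nonneg_right (hterm _ (norm_nonneg _) y)
  · by_cases hy : y ∈ ball (0 : EuclideanSpace ℝ (Fin n)) (2 / τ)
    · rw [Set.indicator_of_mem hy]
      have := main_bound τ hτ σ (s y) hsy (hs1 y) y x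
      rw [abs_sub_comm] at this
      calc |τ ^ σ * stdCutoff (τ • x) - τ ^ σ * stdCutoff (τ • y)|
          ≤ ‖y - x‖ ^ s y * (2 * τ ^ (σ + s y)) := this
        _ = ‖x - y‖ ^ s y * (2 * τ ^ (σ + s y) * 1) := by rw [norm_sub_rev]; ring
        _ ≤ _ := le_add_of_nonneg_left (hterm _ (norm_nonneg _) x)
    · -- both outside the ball: both cutoffs vanish
      have hnx : 2 ≤ ‖τ • x‖ := by
        rw [mem_ball, dist_zero_right, not_lt] at hx
        rw [norm_smul, Real.norm_eq_abs, abs_of_pos hτ]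
        rw [div_le_iff₀ hτ, mul_comm] at hx
        linarith
      have hny : 2 ≤ ‖τ • y‖ := by
        rw [mem_ball, dist_zero_right, not_lt] at hy
        rw [norm_smul, Real.norm_eq_abs, abs_of_pos hτ]
        rw [div_le_iff₀ hτ, mul_comm] at hy
        linarith
      rw [stdCutoff_zero_of_two_le _ hnx, stdCutoff_zero_of_two_le _ hny]
      simp only [mul_zero, sub_zero, abs_zero]
      exact add_nonneg (hterm _ (norm_nonneg _) x) (hterm _ (norm_nonneg _) y)
end

section
/- Let (X,d,μ) be a totally bounded metric measure space (μ positive and finite on balls), and let s, p be bounded measurable exponents with s^-, p^- > 0. Then every family F ⊆ M^{s(·),p(·)}(X,d,μ) bounded in the M^{s(·),p(·)}-quasi-norm is p(·)-equi-integrable: for every ε > 0 there exists δ > 0 such that for every measurable A ⊆ X with μ(A) < δ, sup_{u∈F} ∫_A |u(x)|^{p(x)} dμ(x) < ε. -/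
open MeasureTheory Metric Filter
open scoped ENNReal Topology

/-- `g` is a scalar `s(·)`-gradient of `u`: `g ≥ 0` and, off a `μ`-null set,
`|u(x) - u(y)| ≤ d(x,y)^{s(x)} g(x) + d(x,y)^{s(y)} g(y)`. -/
def IsHGrad {X : Type*} [MetricSpace X] [MeasurableSpace X] (μ : Measure X)
    (s : X → ℝ) (u g : X → ℝ) : Prop :=
  (∀ x, 0 ≤ g x) ∧ ∃ N : Set X, μ N = 0 ∧ ∀ x, x ∉ N → ∀ y, y ∉ N →
    |u x - u y| ≤ dist x y ^ s x * g x + dist x y ^ s y * g y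

/-- The quasi-norm of the variable exponent Hajłasz–Sobolev space `M^{s(·),p(·)}(X, d, μ)`:
`‖u‖_{L^{p(·)}} + inf { ‖g‖_{L^{p(·)}} : g a scalar s(·)-gradient of u }`
(the infimum of the empty set in `ℝ≥0∞` being `∞`). -/
noncomputable def sobNorm {X : Type*} [MetricSpace X] [MeasurableSpace X] (μ : Measure X)
    (s p : X → ℝ) (u : X → ℝ) : ℝ≥0∞ :=
  vLux μ p u + sInf ((vLux μ p) '' {g | IsHGrad μ s u g})

lemma exists_scale {X : Type*} [MeasurableSpace X] (μ : Measure X)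
    (p : X → ℝ) (u : X → ℝ) {Λ : ℝ} (h : vLux μ p u < ENNReal.ofReal Λ) :
    ∃ l : ℝ, 0 < l ∧ l < Λ ∧ vModular μ p (fun x => u x / l) ≤ 1 := by
  rw [vLux] at h
  obtain ⟨v, hv, hvΛ⟩ := sInf_lt_iff.mp h
  obtain ⟨l, hl0, rfl, hm⟩ := hv
  exact ⟨l, hl0, (ENNReal.ofReal_lt_ofReal_iff_of_nonneg hl0.le).mp hvΛ, hm⟩

lemma markov_aux {X : Type*} [MeasurableSpace X] {μ : Measure X} {S : Set X}
    (hS : NullMeasurableSet S μ) {f : X → ℝ≥0∞} {c : ℝ≥0∞} (hc : ∀ x ∈ S, c ≤ f x) :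
    c * μ S ≤ ∫⁻ x, f x ∂μ := by
  have h1 : ∫⁻ x, S.indicator (fun _ => c) x ∂μ = c * μ S := by
    rw [lintegral_indicator₀ hS, setLIntegral_const]
  rw [← h1]
  refine lintegral_mono fun x => ?_
  by_cases hx : x ∈ S
  · simpa [Set.indicator_of_mem hx] using hc x hx
  · simp [Set.indicator_of_notMem hx]

set_option maxHeartbeats 2000000

/-- Let `(X, d, μ)` be a totally bounded metric measure space (with `μ`
positive and finite on balls), and let `s, p` be bounded measurable exponents with
`s⁻, p⁻ > 0`.  Then every family `F ⊆ M^{s(·),p(·)}(X, d, μ)` bounded in the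
`M^{s(·),p(·)}`-quasi-norm is `p(·)`-equi-integrable: for every `ε > 0` there exists `δ > 0`
such that for every measurable `A ⊆ X` with `μ(A) < δ`,
`sup_{u ∈ F} ∫_A |u(x)|^{p(x)} dμ(x) < ε`. -/
theorem sobolev_equiIntegrable_of_totallyBounded
    {X : Type*} [MetricSpace X] [MeasurableSpace X] [BorelSpace X] (μ : Measure X)
    (hball : ∀ (x : X) (r : ℝ), 0 < r → 0 < μ (ball x r) ∧ μ (ball x r) < ⊤)
    (htb : TotallyBounded (Set.univ : Set X))
    (s p : X → ℝ) (hms : Measurable s) (hmp : Measurable p)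
    (a b : ℝ) (ha : 0 < a)
    (hbd : ∀ᵐ x ∂μ, a ≤ s x ∧ s x ≤ b ∧ a ≤ p x ∧ p x ≤ b)
    (F : Set (X → ℝ)) (C : ℝ≥0∞) (hC : C < ⊤) (hF : ∀ u ∈ F, sobNorm μ s p u ≤ C) :
    ∀ ε : ℝ, 0 < ε → ∃ δ : ℝ, 0 < δ ∧ ∀ A : Set X, MeasurableSet A →
      μ A < ENNReal.ofReal δ → ∀ u ∈ F,
        ∫⁻ x in A, ENNReal.ofReal (|u x| ^ p x) ∂μ < ENNReal.ofReal ε := by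
  intro ε hε
  rcases isEmpty_or_nonempty X with hX | hX
  · refine ⟨1, one_pos, fun A hA hAμ u hu => ?_⟩
    have hμ : μ = 0 := by
      ext t ht
      rw [Set.eq_empty_of_isEmpty t]
      exact measure_empty
    rw [hμ]
    simpa using ENNReal.ofReal_pos.mpr hε
  -- X nonempty
  have hμ0 : μ ≠ 0 := by
    obtain ⟨x⟩ := hX
    intro h
    have h1 := (hball x 1 one_pos).1
    rw [h] at h1
    simp at h1
  have hne : (ae μ).NeBot := ae_neBot.mpr hμ0
  obtain ⟨x₀, hx₀⟩ := hbd.exists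
  have hab : a ≤ b := le_trans hx₀.1 hx₀.2.1
  have hb : 0 < b := lt_of_lt_of_le ha hab
  have hE : μ {x | ¬ (a ≤ s x ∧ s x ≤ b ∧ a ≤ p x ∧ p x ≤ b)} = 0 := ae_iff.mp hbd
  -- the uniform scale Λ
  set Λ : ℝ := max (C.toReal + 2) 1 with hΛdef
  have hΛ1 : 1 ≤ Λ := le_max_right _ _
  have hΛ0 : (0:ℝ) < Λ := lt_of_lt_of_le one_pos hΛ1
  have hCΛ : C < ENNReal.ofReal Λ := by
    rw [ENNReal.lt_ofReal_iff_toReal_lt hC.ne]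
    calc C.toReal < C.toReal + 2 := by linarith
    _ ≤ Λ := le_max_left _ _
  clear_value Λ
  -- constants
  have h2b : (0:ℝ) < 2 ^ b := Real.rpow_pos_of_pos two_pos b
  have hΛb : (0:ℝ) < Λ ^ b := Real.rpow_pos_of_pos hΛ0 b
  set c2 : ℝ := 2 ^ b * Λ ^ b with hc2def
  have hc2 : 0 < c2 := mul_pos h2b hΛb
  clear_value c2
  -- the radius
  set η : ℝ := min 1 (ε / (4 * c2)) with hηdef
  have hη0 : 0 < η := lt_min one_pos (div_pos hε (by linarith))
  have hη1 : η ≤ 1 := min_le_left _ _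
  have hη2 : η ≤ ε / (4 * c2) := min_le_right _ _
  clear_value η
  set R : ℝ := η ^ ((a*a)⁻¹ : ℝ) with hRdef
  have hR0 : 0 < R := Real.rpow_pos_of_pos hη0 _
  have hR1 : R ≤ 1 := Real.rpow_le_one hη0.le hη1 (by positivity)
  have hRaa : R ^ (a*a) = η := by
    rw [hRdef, ← Real.rpow_mul hη0.le, inv_mul_cancel₀ (by positivity), Real.rpow_one]
  clear_value R
  have hr0 : 0 < R / 2 := by linarith
  -- the cover
  obtain ⟨t, htfin, htcov⟩ := totallyBounded_iff.mp htb (R/2) hr0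
  have htne : t.Nonempty := by
    obtain ⟨x⟩ := hX
    rcases Set.mem_iUnion₂.mp (htcov (Set.mem_univ x)) with ⟨z, hz, -⟩
    exact ⟨z, hz⟩
  have htFne : htfin.toFinset.Nonempty := by
    simpa [Set.Finite.toFinset_nonempty] using htne
  set m0 : ℝ≥0∞ := htfin.toFinset.inf' htFne (fun z => μ (ball z (R/2))) with hm0def
  have hm0pos : 0 < m0 := by
    rw [hm0def, Finset.lt_inf'_iff]
    exact fun z _ => (hball z _ hr0).1
  have hm0top : m0 ≠ ⊤ := by
    obtain ⟨z, hz⟩ := htFne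
    exact ne_top_of_le_ne_top (hball z _ hr0).2.ne (Finset.inf'_le _ hz)
  have hm0le : ∀ z ∈ t, m0 ≤ μ (ball z (R/2)) := fun z hz =>
    Finset.inf'_le _ (htfin.mem_toFinset.mpr hz)
  clear_value m0
  -- the height K
  have h2m0 : 2 / m0 ≠ ⊤ := (ENNReal.div_lt_top (by norm_num) hm0pos.ne').ne
  obtain ⟨n, hn⟩ := ENNReal.exists_nat_gt h2m0
  have hn0 : (n:ℝ≥0∞) ≠ 0 := by
    intro h
    rw [h] at hn
    exact absurd hn (by simp)
  set K : ℝ := max 1 ((n:ℝ) ^ (a⁻¹:ℝ)) with hKdef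
  have hK1 : 1 ≤ K := le_max_left _ _
  have hK0 : (0:ℝ) < K := lt_of_lt_of_le one_pos hK1
  have hKapos : (0:ℝ) < K ^ a := Real.rpow_pos_of_pos hK0 a
  have hKa : (n:ℝ≥0∞) ≤ ENNReal.ofReal (K ^ a) := by
    have h1 : ((n:ℝ)) ≤ K ^ a := by
      calc (n:ℝ) = ((n:ℝ) ^ (a⁻¹:ℝ)) ^ a := by
            rw [← Real.rpow_mul (Nat.cast_nonneg n), inv_mul_cancel₀ ha.ne', Real.rpow_one]
      _ ≤ K ^ a := Real.rpow_le_rpow (Real.rpow_nonneg (Nat.cast_nonneg n) _)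
            (le_max_right _ _) ha.le
    calc (n:ℝ≥0∞) = ENNReal.ofReal (n:ℝ) := by simp
    _ ≤ _ := ENNReal.ofReal_le_ofReal h1
  clear_value K
  have hΛK0 : (0:ℝ) < Λ * K := mul_pos hΛ0 hK0
  have hΛK1 : (1:ℝ) ≤ Λ * K := by
    calc (1:ℝ) = 1 * 1 := by ring
    _ ≤ Λ * K := mul_le_mul hΛ1 hK1 zero_le_one hΛ0.le
  -- final constants
  set c1 : ℝ := (4 * Λ * K) ^ b with hc1def
  have h4ΛK : (1:ℝ) ≤ 4 * Λ * K := by linarith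
  have hc1pos : (0:ℝ) < c1 := Real.rpow_pos_of_pos (by linarith) b
  clear_value c1
  refine ⟨ε / (4 * c1), div_pos hε (by linarith), fun A hA hAμ u hu => ?_⟩
  -- extract scales and gradient for u
  obtain ⟨lu, hlu0, hluΛ, hmu⟩ := exists_scale μ p u
    (lt_of_le_of_lt (le_trans le_self_add (hF u hu)) hCΛ)
  have hg' : sInf ((vLux μ p) '' {g | IsHGrad μ s u g}) < ENNReal.ofReal Λ :=
    lt_of_le_of_lt (le_trans le_add_self (hF u hu)) hCΛ
  obtain ⟨v, hvmem, hvΛ⟩ := sInf_lt_iff.mp hg'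
  obtain ⟨g, hgGrad, rfl⟩ := hvmem
  obtain ⟨lg, hlg0, hlgΛ, hmg⟩ := exists_scale μ p g hvΛ
  obtain ⟨hgnn, N, hN, hgrad⟩ := hgGrad
  set D : Set X := N ∪ {x | ¬ (a ≤ s x ∧ s x ≤ b ∧ a ≤ p x ∧ p x ≤ b)} with hDdef
  have hD : μ D = 0 := measure_union_null hN hE
  have hDs : ∀ x, x ∉ D → a ≤ s x ∧ s x ≤ b ∧ a ≤ p x ∧ p x ≤ b := by
    intro x hx
    by_contra h
    exact hx (Or.inr h)
  have hDN : ∀ x, x ∉ D → x ∉ N := fun x hx h => hx (Or.inl h)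
  -- Step A : a good point in each ball
  have stepA : ∀ z ∈ t, ∃ y, y ∈ ball z (R/2) ∧ y ∉ D ∧
      |u y| + R ^ a * g y ≤ 2 * (Λ * K) := by
    intro z hz
    by_contra hcon
    push_neg at hcon
    set T : Set X := ball z (R / 2) \ D with hTdef
    have hTD : ∀ y ∈ T, y ∉ D := fun y hy => hy.2
    have hTcon : ∀ y ∈ T, 2 * (Λ * K) < |u y| + R ^ a * g y := fun y hy =>
      hcon y hy.1 hy.2
    have hTmeas : NullMeasurableSet T μ :=
      measurableSet_ball.nullMeasurableSet.diff (NullMeasurableSet.of_null hD)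
    set V : Set X := {y | y ∈ T ∧ g y ≤ Λ * K} with hVdef
    have hRa1 : R ^ a ≤ 1 := Real.rpow_le_one hR0.le hR1 ha.le
    have hVu : ∀ y ∈ V, Λ * K < |u y| := by
      intro y hy
      have h1 := hTcon y hy.1
      have h2 : R ^ a * g y ≤ g y := by
        have := mul_le_mul_of_nonneg_right hRa1 (hgnn y)
        linarith
      have h3 := hy.2
      linarith
    -- points of T in the closure of V also have |u| ≥ ΛK
    have hclos : ∀ w, w ∈ T → w ∈ closure V → Λ * K ≤ |u w| := by
      intro w hw hwc
      by_contra hlt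
      push_neg at hlt
      have hwD := hTD w hw
      have hsw : a ≤ s w := (hDs w hwD).1
      have hgw := hgnn w
      set θ : ℝ := Λ * K - |u w| with hθdef
      have hθ0 : (0 : ℝ) < θ := sub_pos.mpr hlt
      clear_value θ
      have hden : (0 : ℝ) < Λ * K + g w + 1 := by linarith
      set ρ : ℝ := min (1 / 2) ((θ / (Λ * K + g w + 1)) ^ (a⁻¹ : ℝ)) with hρdef
      have hρ0 : 0 < ρ := lt_min (by norm_num) (Real.rpow_pos_of_pos (div_pos hθ0 hden) _)
      have hρh : ρ ≤ 1 / 2 := min_le_left _ _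
      have hρr : ρ ≤ (θ / (Λ * K + g w + 1)) ^ (a⁻¹ : ℝ) := min_le_right _ _
      clear_value ρ
      obtain ⟨x, hxV, hdist⟩ := Metric.mem_closure_iff.mp hwc ρ hρ0
      have hxT := hxV.1
      have hxD := hTD x hxT
      have hsx : a ≤ s x := (hDs x hxD).1
      have hux := hVu x hxV
      have hd0 : (0 : ℝ) ≤ dist w x := dist_nonneg
      rcases eq_or_lt_of_le hd0 with h0 | hdpos
      · have hwx : w = x := dist_eq_zero.mp h0.symm
        rw [hwx] at hlt
        linarith
      · have hd1 : dist w x ≤ 1 :=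
          le_trans hdist.le (le_trans hρh (by norm_num))
        have h1 : dist w x ^ s w ≤ dist w x ^ a :=
          Real.rpow_le_rpow_of_exponent_ge hdpos hd1 hsw
        have h2 : dist w x ^ s x ≤ dist w x ^ a :=
          Real.rpow_le_rpow_of_exponent_ge hdpos hd1 hsx
        have hda : dist w x ^ a ≤ θ / (Λ * K + g w + 1) := by
          calc dist w x ^ a ≤ ρ ^ a := Real.rpow_le_rpow hd0 hdist.le ha.le
          _ ≤ ((θ / (Λ * K + g w + 1)) ^ (a⁻¹ : ℝ)) ^ a :=
              Real.rpow_le_rpow hρ0.le hρr ha.le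
          _ = θ / (Λ * K + g w + 1) := by
              rw [← Real.rpow_mul (div_pos hθ0 hden).le, inv_mul_cancel₀ ha.ne',
                Real.rpow_one]
        have hgi := hgrad w (hDN w hwD) x (hDN x hxD)
        have hgx : g x ≤ Λ * K := hxV.2
        have hbound : dist w x ^ s w * g w + dist w x ^ s x * g x ≤
            (θ / (Λ * K + g w + 1)) * (g w + Λ * K) := by
          have e1 : dist w x ^ s w * g w ≤ dist w x ^ a * g w :=
            mul_le_mul_of_nonneg_right h1 hgw
          have e2 : dist w x ^ s x * g x ≤ dist w x ^ a * g x :=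
            mul_le_mul_of_nonneg_right h2 (hgnn x)
          have e3 : dist w x ^ a * g x ≤ dist w x ^ a * (Λ * K) :=
            mul_le_mul_of_nonneg_left hgx (Real.rpow_nonneg hd0 a)
          have e5 : dist w x ^ a * (g w + Λ * K) ≤
              (θ / (Λ * K + g w + 1)) * (g w + Λ * K) := by
            apply mul_le_mul_of_nonneg_right hda
            linarith
          linarith
        have hlast : (θ / (Λ * K + g w + 1)) * (g w + Λ * K) < θ := by
          rw [div_mul_eq_mul_div, div_lt_iff₀ hden]
          exact mul_lt_mul_of_pos_left (by linarith) hθ0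
        have habs : |u x| - |u w| ≤ |u w - u x| := by
          have h := abs_sub_abs_le_abs_sub (u x) (u w)
          rwa [abs_sub_comm] at h
        have hfin : |u x| < Λ * K := by
          have hc := le_trans hgi hbound
          have hθeq : θ = Λ * K - |u w| := hθdef
          linarith
        linarith
    -- Chebyshev on the two pieces
    set S1 : Set X := T ∩ closure V with hS1def
    set S2 : Set X := T \ closure V with hS2def
    have hclosedV : MeasurableSet (closure V) := isClosed_closure.measurableSet
    have hS1m : NullMeasurableSet S1 μ := hTmeas.inter hclosedV.nullMeasurableSet
    have hS2m : NullMeasurableSet S2 μ := hTmeas.diff hclosedV.nullMeasurableSet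
    have hmu' : (∫⁻ x, ENNReal.ofReal (|u x / lu| ^ p x) ∂μ) ≤ 1 := hmu
    have hmg'' : (∫⁻ x, ENNReal.ofReal (|g x / lg| ^ p x) ∂μ) ≤ 1 := hmg
    have hMk1 : ENNReal.ofReal (K ^ a) * μ S1 ≤ 1 := by
      refine le_trans (markov_aux hS1m
        (f := fun x => ENNReal.ofReal (|u x / lu| ^ p x)) ?_) hmu'
      intro x hx
      have hxD := hTD x hx.1
      obtain ⟨hsa, hsb, hpa, hpb⟩ := hDs x hxD
      have hux : Λ * K ≤ |u x| := hclos x hx.1 hx.2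
      have h1 : K ≤ |u x / lu| := by
        rw [abs_div, abs_of_pos hlu0, le_div_iff₀ hlu0]
        calc K * lu ≤ Λ * K := by
              rw [mul_comm]; exact mul_le_mul_of_nonneg_right hluΛ.le hK0.le
        _ ≤ |u x| := hux
      have h2 : K ^ a ≤ |u x / lu| ^ p x := by
        calc K ^ a ≤ |u x / lu| ^ a := Real.rpow_le_rpow hK0.le h1 ha.le
        _ ≤ |u x / lu| ^ p x :=
            Real.rpow_le_rpow_of_exponent_le (le_trans hK1 h1) hpa
      exact ENNReal.ofReal_le_ofReal h2
    have hMk2 : ENNReal.ofReal (K ^ a) * μ S2 ≤ 1 := by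
      refine le_trans (markov_aux hS2m
        (f := fun x => ENNReal.ofReal (|g x / lg| ^ p x)) ?_) hmg''
      intro x hx
      have hxT := hx.1
      have hxD := hTD x hxT
      obtain ⟨hsa, hsb, hpa, hpb⟩ := hDs x hxD
      have hxV : x ∉ V := fun h => hx.2 (subset_closure h)
      have hgx : Λ * K < g x := by
        by_contra hgg
        push_neg at hgg
        exact hxV ⟨hxT, hgg⟩
      have h1 : K ≤ |g x / lg| := by
        rw [abs_div, abs_of_pos hlg0, abs_of_nonneg (hgnn x), le_div_iff₀ hlg0]
        calc K * lg ≤ Λ * K := by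
              rw [mul_comm]; exact mul_le_mul_of_nonneg_right hlgΛ.le hK0.le
        _ ≤ g x := hgx.le
      have h2 : K ^ a ≤ |g x / lg| ^ p x := by
        calc K ^ a ≤ |g x / lg| ^ a := Real.rpow_le_rpow hK0.le h1 ha.le
        _ ≤ |g x / lg| ^ p x :=
            Real.rpow_le_rpow_of_exponent_le (le_trans hK1 h1) hpa
      exact ENNReal.ofReal_le_ofReal h2
    -- combine
    have hTsub : T ⊆ S1 ∪ S2 := by
      intro x hx
      by_cases h : x ∈ closure V
      · exact Or.inl ⟨hx, h⟩
      · exact Or.inr ⟨hx, h⟩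
    have hKane : ENNReal.ofReal (K ^ a) ≠ 0 := (ENNReal.ofReal_pos.mpr hKapos).ne'
    have hμS1 : μ S1 ≤ (n : ℝ≥0∞)⁻¹ := by
      have h1 : μ S1 ≤ (ENNReal.ofReal (K ^ a))⁻¹ :=
        ENNReal.le_inv_iff_mul_le.mpr (by rwa [mul_comm] at hMk1)
      exact le_trans h1 (ENNReal.inv_le_inv.mpr hKa)
    have hμS2 : μ S2 ≤ (n : ℝ≥0∞)⁻¹ := by
      have h1 : μ S2 ≤ (ENNReal.ofReal (K ^ a))⁻¹ :=
        ENNReal.le_inv_iff_mul_le.mpr (by rwa [mul_comm] at hMk2)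
      exact le_trans h1 (ENNReal.inv_le_inv.mpr hKa)
    have hmuT : μ (ball z (R / 2)) = μ T := (measure_diff_null hD).symm
    have hfinal : μ (ball z (R / 2)) ≤ 2 * (n : ℝ≥0∞)⁻¹ := by
      rw [hmuT]
      calc μ T ≤ μ (S1 ∪ S2) := measure_mono hTsub
      _ ≤ μ S1 + μ S2 := measure_union_le _ _
      _ ≤ (n : ℝ≥0∞)⁻¹ + (n : ℝ≥0∞)⁻¹ := add_le_add hμS1 hμS2
      _ = 2 * (n : ℝ≥0∞)⁻¹ := (two_mul _).symm
    have hlt2 : 2 * (n : ℝ≥0∞)⁻¹ < m0 := by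
      have h1 : (2 : ℝ≥0∞) < m0 * (n : ℝ≥0∞) := by
        rw [ENNReal.div_lt_iff (Or.inl hm0pos.ne') (Or.inl hm0top)] at hn
        rwa [mul_comm] at hn
      have h2 : (2 : ℝ≥0∞) / (n : ℝ≥0∞) < m0 :=
        (ENNReal.div_lt_iff (Or.inl hn0) (Or.inl (ENNReal.natCast_ne_top n))).mpr h1
      rwa [div_eq_mul_inv] at h2
    exact absurd (le_trans (hm0le z hz) hfinal) (not_le.mpr hlt2)
  -- Step B : pointwise bound off D
  have stepB : ∀ x, x ∉ D → |u x| ≤ 2 * (Λ * K) + R ^ a * g x := by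
    intro x hx
    obtain ⟨z, hz, hxz⟩ := Set.mem_iUnion₂.mp (htcov (Set.mem_univ x))
    obtain ⟨y, hyz, hyD, hy⟩ := stepA z hz
    have hd : dist x y < R := by
      have h1 : dist x z < R / 2 := mem_ball.mp hxz
      have h2 : dist y z < R / 2 := mem_ball.mp hyz
      calc dist x y ≤ dist x z + dist z y := dist_triangle x z y
      _ < R := by rw [dist_comm z y]; linarith
    have hd0 : (0 : ℝ) ≤ dist x y := dist_nonneg
    have hsx := (hDs x hx).1
    have hsy := (hDs y hyD).1
    have hdx : dist x y ^ s x ≤ R ^ a := by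
      calc dist x y ^ s x ≤ R ^ s x :=
            Real.rpow_le_rpow hd0 hd.le (le_trans ha.le hsx)
      _ ≤ R ^ a := Real.rpow_le_rpow_of_exponent_ge hR0 hR1 hsx
    have hdy : dist x y ^ s y ≤ R ^ a := by
      calc dist x y ^ s y ≤ R ^ s y :=
            Real.rpow_le_rpow hd0 hd.le (le_trans ha.le hsy)
      _ ≤ R ^ a := Real.rpow_le_rpow_of_exponent_ge hR0 hR1 hsy
    have hgi := hgrad x (hDN x hx) y (hDN y hyD)
    have habs : |u x| - |u y| ≤ |u x - u y| := abs_sub_abs_le_abs_sub _ _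
    have h5 : dist x y ^ s x * g x ≤ R ^ a * g x :=
      mul_le_mul_of_nonneg_right hdx (hgnn x)
    have h6 : dist x y ^ s y * g y ≤ R ^ a * g y :=
      mul_le_mul_of_nonneg_right hdy (hgnn y)
    linarith
  -- Step C : pointwise modular bound off D
  have stepC : ∀ x, x ∉ D → ENNReal.ofReal (|u x| ^ p x) ≤
      ENNReal.ofReal c1 + ENNReal.ofReal (c2 * η) * ENNReal.ofReal (|g x / lg| ^ p x) := by
    intro x hx
    obtain ⟨hsa, hsb, hpa, hpb⟩ := hDs x hx
    have hp0 : (0 : ℝ) ≤ p x := le_trans ha.le hpa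
    have hgx := hgnn x
    set B1 : ℝ := 2 * (Λ * K) with hB1
    set B2 : ℝ := R ^ a * g x with hB2
    have hRa0 : (0 : ℝ) < R ^ a := Real.rpow_pos_of_pos hR0 a
    have hB10 : (0 : ℝ) < B1 := by rw [hB1]; linarith
    have hB20 : (0 : ℝ) ≤ B2 := mul_nonneg hRa0.le hgx
    have hgq0 : (0 : ℝ) ≤ g x / lg := div_nonneg hgx hlg0.le
    have key : |u x| ^ p x ≤ c1 + (c2 * η) * |g x / lg| ^ p x := by
      have h1 : |u x| ^ p x ≤ (B1 + B2) ^ p x :=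
        Real.rpow_le_rpow (abs_nonneg _) (stepB x hx) hp0
      have h2 : (B1 + B2) ^ p x ≤ (2 * max B1 B2) ^ p x := by
        apply Real.rpow_le_rpow (by linarith) _ hp0
        rcases le_total B1 B2 with h | h
        · rw [max_eq_right h]; linarith
        · rw [max_eq_left h]; linarith
      have h3 : (2 * max B1 B2) ^ p x = 2 ^ p x * max B1 B2 ^ p x :=
        Real.mul_rpow (by norm_num) (le_max_of_le_left hB10.le)
      have h4 : max B1 B2 ^ p x ≤ B1 ^ p x + B2 ^ p x := by
        rcases max_cases B1 B2 with ⟨hm, _⟩ | ⟨hm, _⟩ <;> rw [hm]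
        · exact le_add_of_nonneg_right (Real.rpow_nonneg hB20 _)
        · exact le_add_of_nonneg_left (Real.rpow_nonneg hB10.le _)
      have hT1 : 2 ^ p x * B1 ^ p x ≤ c1 := by
        rw [← Real.mul_rpow (by norm_num) hB10.le]
        have e : 2 * B1 = 4 * Λ * K := by rw [hB1]; ring
        rw [e, hc1def]
        exact Real.rpow_le_rpow_of_exponent_le h4ΛK hpb
      have hT2 : 2 ^ p x * B2 ^ p x ≤ (c2 * η) * |g x / lg| ^ p x := by
        have e0 : B2 ^ p x = (R ^ a) ^ p x * g x ^ p x := Real.mul_rpow hRa0.le hgx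
        have e1 : (2 : ℝ) ^ p x ≤ 2 ^ b :=
          Real.rpow_le_rpow_of_exponent_le one_le_two hpb
        have e2 : (R ^ a) ^ p x ≤ η := by
          rw [← Real.rpow_mul hR0.le]
          calc R ^ (a * p x) ≤ R ^ (a * a) :=
                Real.rpow_le_rpow_of_exponent_ge hR0 hR1
                  (mul_le_mul_of_nonneg_left hpa ha.le)
          _ = η := hRaa
        have e3 : g x ^ p x ≤ Λ ^ b * |g x / lg| ^ p x := by
          have hq : |g x / lg| = g x / lg := abs_of_nonneg hgq0
          rw [hq]
          have e : g x = lg * (g x / lg) := by field_simp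
          calc g x ^ p x = (lg * (g x / lg)) ^ p x := by rw [← e]
          _ = lg ^ p x * (g x / lg) ^ p x := Real.mul_rpow hlg0.le hgq0
          _ ≤ Λ ^ b * (g x / lg) ^ p x := by
              apply mul_le_mul_of_nonneg_right _ (Real.rpow_nonneg hgq0 _)
              calc lg ^ p x ≤ Λ ^ p x := Real.rpow_le_rpow hlg0.le hlgΛ.le hp0
              _ ≤ Λ ^ b := Real.rpow_le_rpow_of_exponent_le hΛ1 hpb
        have n1 : (0 : ℝ) ≤ (R ^ a) ^ p x * g x ^ p x :=
          mul_nonneg (Real.rpow_nonneg hRa0.le _) (Real.rpow_nonneg hgx _)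
        have m1 : (R ^ a) ^ p x * g x ^ p x ≤ η * (Λ ^ b * |g x / lg| ^ p x) :=
          mul_le_mul e2 e3 (Real.rpow_nonneg hgx _) hη0.le
        calc 2 ^ p x * B2 ^ p x = 2 ^ p x * ((R ^ a) ^ p x * g x ^ p x) := by rw [e0]
        _ ≤ 2 ^ b * (η * (Λ ^ b * |g x / lg| ^ p x)) := mul_le_mul e1 m1 n1 h2b.le
        _ = (c2 * η) * |g x / lg| ^ p x := by rw [hc2def]; ring
      calc |u x| ^ p x ≤ 2 ^ p x * max B1 B2 ^ p x := by
            rw [← h3]; exact le_trans h1 h2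
      _ ≤ 2 ^ p x * (B1 ^ p x + B2 ^ p x) :=
          mul_le_mul_of_nonneg_left h4 (Real.rpow_nonneg (by norm_num) _)
      _ = 2 ^ p x * B1 ^ p x + 2 ^ p x * B2 ^ p x := by ring
      _ ≤ c1 + (c2 * η) * |g x / lg| ^ p x := add_le_add hT1 hT2
    calc ENNReal.ofReal (|u x| ^ p x)
        ≤ ENNReal.ofReal (c1 + (c2 * η) * |g x / lg| ^ p x) :=
          ENNReal.ofReal_le_ofReal key
    _ = _ := by
        rw [ENNReal.ofReal_add hc1pos.le (mul_nonneg (mul_nonneg hc2.le hη0.le)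
            (Real.rpow_nonneg (abs_nonneg _) _)),
          ENNReal.ofReal_mul (mul_nonneg hc2.le hη0.le)]
  -- Step D : integrate
  have hmg' : (∫⁻ x, ENNReal.ofReal (|g x / lg| ^ p x) ∂μ) ≤ 1 := hmg
  have hψmod : ∫⁻ x in A, ENNReal.ofReal (|g x / lg| ^ p x) ∂μ ≤ 1 :=
    le_trans (lintegral_mono' Measure.restrict_le_self le_rfl) hmg'
  have haeA : ∀ᵐ x ∂(μ.restrict A), ENNReal.ofReal (|u x| ^ p x) ≤
      ENNReal.ofReal c1 + ENNReal.ofReal (c2 * η) * ENNReal.ofReal (|g x / lg| ^ p x) := by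
    refine ae_restrict_of_ae ?_
    rw [ae_iff]
    refine measure_mono_null ?_ hD
    intro x hx
    by_contra hxD
    exact hx (stepC x hxD)
  have hc2η : ENNReal.ofReal (c2 * η) ≤ ENNReal.ofReal (ε / 4) := by
    apply ENNReal.ofReal_le_ofReal
    calc c2 * η ≤ c2 * (ε / (4 * c2)) := mul_le_mul_of_nonneg_left hη2 hc2.le
    _ = ε / 4 := by field_simp [hc2.ne']
  calc ∫⁻ x in A, ENNReal.ofReal (|u x| ^ p x) ∂μ
      ≤ ∫⁻ x in A, (ENNReal.ofReal c1 +
          ENNReal.ofReal (c2 * η) * ENNReal.ofReal (|g x / lg| ^ p x)) ∂μ :=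
        lintegral_mono_ae haeA
  _ = ENNReal.ofReal c1 * μ A + ENNReal.ofReal (c2 * η) *
        ∫⁻ x in A, ENNReal.ofReal (|g x / lg| ^ p x) ∂μ := by
      rw [lintegral_add_left measurable_const, setLIntegral_const,
        lintegral_const_mul' _ _ ENNReal.ofReal_ne_top]
  _ ≤ ENNReal.ofReal c1 * μ A + ENNReal.ofReal (ε / 4) * 1 := by
      gcongr
  _ = ENNReal.ofReal c1 * μ A + ENNReal.ofReal (ε / 4) := by rw [mul_one]
  _ < ENNReal.ofReal c1 * ENNReal.ofReal (ε / (4 * c1)) + ENNReal.ofReal (ε / 4) := by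
      refine ENNReal.add_lt_add_right ENNReal.ofReal_ne_top ?_
      exact ENNReal.mul_right_strictMono (ENNReal.ofReal_pos.mpr hc1pos).ne'
        ENNReal.ofReal_ne_top hAμ
  _ = ENNReal.ofReal (ε / 4) + ENNReal.ofReal (ε / 4) := by
      rw [← ENNReal.ofReal_mul hc1pos.le]
      congr 1
      field_simp [hc1pos.ne']
  _ = ENNReal.ofReal (ε / 4 + ε / 4) :=
      (ENNReal.ofReal_add (by positivity) (by positivity)).symm
  _ < ENNReal.ofReal ε := by
      rw [ENNReal.ofReal_lt_ofReal_iff hε]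
      linarith
end
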